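/- arXiv:1509.08879 — 3 statements merged into one kernel-verified Lean document; each statement's English description precedes it below -/
import Mathlib

section
/- Let ℓ ≥ 1 and let λ_{1,1}, …, λ_{ℓ,1} be nonzero real numbers. Set μ₀ = 1 and μ_m = ∏_{j=1}^{m} λ_{j,1} for 1 ≤ m ≤ ℓ, and define λ_{m,n} = μ_m / (μ_{n−1} μ_{m−n}) for 1 ≤ n ≤ m ≤ ℓ. Then these numbers satisfy the compatibility relations λ_{m,n} · λ_{m−n,p−n} = λ_{m,p} · λ_{p−1,n} for all indices with 1 ≤ n < p ≤ m ≤ ℓ. -/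
/-!
Both sides of the relation equal `μ_m / (μ_{n-1} μ_{p-n-1} μ_{m-p})`: in each product the
numerator of the second factor (`μ_{m-n}`, resp. `μ_{p-1}`) cancels a factor of the first
denominator.
-/

noncomputable section

/-- `μ_m = ∏_{j=1}^m λ_{j,1}` (so `μ₀ = 1`). -/
def muProd (lam1 : ℕ → ℝ) (m : ℕ) : ℝ := ∏ j ∈ Finset.Icc 1 m, lam1 j

/-- `λ_{m,n} = μ_m / (μ_{n-1} μ_{m-n})`. -/
def lamGen (lam1 : ℕ → ℝ) (m n : ℕ) : ℝ :=
  muProd lam1 m / (muProd lam1 (n - 1) * muProd lam1 (m - n))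

lemma muProd_ne_zero {ℓ : ℕ} {lam1 : ℕ → ℝ} (hnz : ∀ j, 1 ≤ j → j ≤ ℓ → lam1 j ≠ 0)
    {k : ℕ} (hk : k ≤ ℓ) : muProd lam1 k ≠ 0 :=
  Finset.prod_ne_zero_iff.2 fun j hj =>
    hnz j (Finset.mem_Icc.1 hj).1 ((Finset.mem_Icc.1 hj).2.trans hk)

lemma lamGen_mul_lamGen_sub {lam1 : ℕ → ℝ} {m n : ℕ} (h : muProd lam1 (m - n) ≠ 0) (k : ℕ) :
    lamGen lam1 m n * lamGen lam1 (m - n) k =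
      muProd lam1 m /
        (muProd lam1 (n - 1) * muProd lam1 (k - 1) * muProd lam1 (m - n - k)) := by
  unfold lamGen
  field_simp

lemma lamGen_mul_lamGen_pred {lam1 : ℕ → ℝ} {p : ℕ} (h : muProd lam1 (p - 1) ≠ 0) (m n : ℕ) :
    lamGen lam1 m p * lamGen lam1 (p - 1) n =
      muProd lam1 m /
        (muProd lam1 (n - 1) * muProd lam1 (p - 1 - n) * muProd lam1 (m - p)) := by
  unfold lamGen
  field_simp

theorem compatibility_of_lamGen_general (ℓ : ℕ) (lam1 : ℕ → ℝ)
    (hnz : ∀ j, 1 ≤ j → j ≤ ℓ → lam1 j ≠ 0) :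
    ∀ m n p : ℕ, 1 ≤ n → n < p → p ≤ m → m ≤ ℓ →
      lamGen lam1 m n * lamGen lam1 (m - n) (p - n) =
        lamGen lam1 m p * lamGen lam1 (p - 1) n := by
  intro m n p hn hnp hpm hmℓ
  rw [lamGen_mul_lamGen_sub (muProd_ne_zero hnz (by omega)),
    lamGen_mul_lamGen_pred (muProd_ne_zero hnz (by omega)),
    show p - n - 1 = p - 1 - n by omega, show m - n - (p - n) = m - p by omega]

/-- The amplitudes `λ_{m,n} = μ_m/(μ_{n-1} μ_{m-n})` built from nonzero `λ_{1,1}, …, λ_{ℓ,1}`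
satisfy the compatibility relations
`λ_{m,n} λ_{m−n,p−n} = λ_{m,p} λ_{p−1,n}` for all `1 ≤ n < p ≤ m ≤ ℓ`. -/
theorem compatibility_of_lamGen (ℓ : ℕ) (hℓ : 1 ≤ ℓ) (lam1 : ℕ → ℝ)
    (hnz : ∀ j, 1 ≤ j → j ≤ ℓ → lam1 j ≠ 0) :
    ∀ m n p : ℕ, 1 ≤ n → n < p → p ≤ m → m ≤ ℓ →
      lamGen lam1 m n * lamGen lam1 (m - n) (p - n) =
        lamGen lam1 m p * lamGen lam1 (p - 1) n :=
  compatibility_of_lamGen_general ℓ lam1 hnz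

end
end

section
/- Let ℓ ≥ 1 and let λ_{m,n} (1 ≤ n ≤ m ≤ ℓ) be real amplitudes satisfying the compatibility relations λ_{m,n} λ_{m−n,p−n} = λ_{m,p} λ_{p−1,n} for all 1 ≤ n < p ≤ m ≤ ℓ. Then for every chain length N, both for periodic boundary conditions and for any special boundary conditions s = (c₁, c_N) with 0 ≤ c₁, c_N ≤ ℓ, the supercharge Q_λ of the M_ℓ model is nilpotent of order two: Q_λ ∘ Q_λ = 0. -/
/-!
Write `Q = ∑ᵢ Qᵢ`, where `Qᵢ` fills site `i`. Since `Qᵢ² = 0`, it suffices that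
`Qᵢ Qⱼ = -Qⱼ Qᵢ` for `i ≠ j`. The fermionic signs of the two orders of filling `i` and `j`
differ by `-1`, so this reduces to the exchange symmetry
`λ(σ, i) λ(σ + i, j) = λ(σ, j) λ(σ + j, i)` of the amplitudes whenever `σ + i + j` is allowed.
Filling one site changes the runs seen from the other only when one of them is the first
empty site after the other. Then a run of length `b` between runs of lengths `a` and `d`
merges into a cluster of length `a + b + d + 2 ≤ ℓ`, and the exchange symmetry is the
compatibility relation for `(m, n, p) = (a + b + d + 2, a + 1, a + b + 2)`. The open chain of
`N` sites is the closed chain of `N + 1` sites whose last site stays empty, so the cluster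
analysis is only needed on the ring.
-/

attribute [local instance 10] Classical.propDecidable

noncomputable section

/-- A configuration of `N` sites: `true` = occupied, `false` = empty. -/
abbrev Config (N : ℕ) := Fin N → Bool

/-- Extension of a configuration to all of `ℕ`, by empty sites outside the chain. -/
def extc {N : ℕ} (σ : Config N) (t : ℕ) : Bool :=
  if h : t < N then σ ⟨t, h⟩ else false

/-- The fermion number: the number of occupied sites. -/
def fermions {N : ℕ} (σ : Config N) : ℕ :=
  (Finset.univ.filter fun i => σ i = true).card

/-- Allowed configurations of the open chain of `N` sites with exclusion parameter `ℓ`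
and special boundary conditions `(c₁, cN)`: no cluster is longer than `ℓ`, the cluster
containing the first site (if occupied) has length at most `c₁`, and the cluster
containing the last site (if occupied) has length at most `cN`. -/
def OpenOK (N ℓ c₁ cN : ℕ) (σ : Config N) : Prop :=
  (∀ a : ℕ, ¬ ∀ k ≤ ℓ, extc σ (a + k) = true) ∧
  (¬ (c₁ + 1 ≤ N ∧ ∀ k ≤ c₁, extc σ k = true)) ∧
  (¬ (cN + 1 ≤ N ∧ ∀ k ≤ cN, extc σ (N - 1 - k) = true))

/-- Cyclic shift of a site of the closed chain by `k` steps. -/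
def cyc {N : ℕ} (i : Fin N) (k : ℕ) : Fin N :=
  ⟨(i.1 + k) % N, Nat.mod_lt _ i.pos⟩

/-- Allowed configurations of the closed chain of `N` sites with periodic boundary
conditions: the chain is not fully occupied and no maximal cyclic run of occupied
sites is longer than `ℓ`. -/
def PerOK (N ℓ : ℕ) (σ : Config N) : Prop :=
  ∀ i : Fin N, ∃ k ≤ ℓ, σ (cyc i k) = false

/-- The fermionic sign `(-1)^{#{j < i : σ j = 1}}`. -/
def sgn {N : ℕ} (σ : Config N) (i : Fin N) : ℂ :=
  (-1 : ℂ) ^ ((Finset.univ.filter fun j => j < i ∧ σ j = true).card)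

/-- The Hilbert space `V_N`: complex functions on allowed configurations. -/
abbrev AState (N : ℕ) (OK : Config N → Prop) := {σ : Config N // OK σ} → ℂ

/-- Matrix of the supercharge with amplitudes `A`, with particle insertion
restricted to the sublattice `S`: the entry `(τ, σ)` is the amplitude (with fermionic
sign) for obtaining `τ` from `σ` by occupying an empty site of `S`. -/
def QmatA (N : ℕ) (OK : Config N → Prop) (S : Fin N → Prop)
    (A : Config N → Fin N → ℂ) :
    Matrix {σ : Config N // OK σ} {σ : Config N // OK σ} ℂ := fun τ σ =>
  ∑ i : Fin N,
    if S i ∧ σ.1 i = false ∧ τ.1 = Function.update σ.1 i true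
    then A σ.1 i * sgn σ.1 i else 0

/-- The supercharge with amplitudes `A` restricted to the sublattice `S`, as a linear map. -/
def QopA (N : ℕ) (OK : Config N → Prop) (S : Fin N → Prop)
    (A : Config N → Fin N → ℂ) : AState N OK →ₗ[ℂ] AState N OK :=
  (QmatA N OK S A).mulVecLin

/-- The unit-coupling supercharge restricted to the sublattice `S`. -/
def Qop (N : ℕ) (OK : Config N → Prop) (S : Fin N → Prop) :
    AState N OK →ₗ[ℂ] AState N OK :=
  QopA N OK S fun _ _ => 1

/-- The subspace `V_{N,f}` of states supported on configurations with fermion number `f`. -/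
def gradeV (N : ℕ) (OK : Config N → Prop) (f : ℕ) :
    Submodule ℂ (AState N OK) where
  carrier := {ψ | ∀ σ, fermions σ.1 ≠ f → ψ σ = 0}
  add_mem' := by
    intro a b ha hb σ h
    show a σ + b σ = 0
    rw [ha σ h, hb σ h, add_zero]
  zero_mem' := by intro σ h; rfl
  smul_mem' := by
    intro c a ha σ h
    show c * a σ = 0
    rw [ha σ h, mul_zero]

/-- Length of the run of occupied sites immediately to the left of site `i` (open chain). -/
def lrunO {N : ℕ} (σ : Config N) (i : Fin N) : ℕ :=
  ((Finset.range N).filter fun r =>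
    1 ≤ r ∧ r ≤ i.1 ∧ ∀ k, 1 ≤ k → k ≤ r → extc σ (i.1 - k) = true).card

/-- Length of the run of occupied sites immediately to the right of site `i` (open chain). -/
def rrunO {N : ℕ} (σ : Config N) (i : Fin N) : ℕ :=
  ((Finset.range N).filter fun r =>
    1 ≤ r ∧ ∀ k, 1 ≤ k → k ≤ r → extc σ (i.1 + k) = true).card

/-- The amplitude `λ_{m(i,σ),n(i,σ)}` for inserting a particle at site `i` of the open
chain: after insertion, `i` is the `n`-th member of an `m`-cluster, with
`m = lrun + rrun + 1` and `n = lrun + 1`. -/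
def AmpO {N : ℕ} (lam : ℕ → ℕ → ℝ) (σ : Config N) (i : Fin N) : ℂ :=
  ((lam (lrunO σ i + rrunO σ i + 1) (lrunO σ i + 1) : ℝ) : ℂ)

/-- Length of the cyclic run of occupied sites immediately to the left of site `i`. -/
def lrunP {N : ℕ} (σ : Config N) (i : Fin N) : ℕ :=
  ((Finset.range N).filter fun r =>
    1 ≤ r ∧ ∀ k, 1 ≤ k → k ≤ r → σ (cyc i (N - k)) = true).card

/-- Length of the cyclic run of occupied sites immediately to the right of site `i`. -/
def rrunP {N : ℕ} (σ : Config N) (i : Fin N) : ℕ :=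
  ((Finset.range N).filter fun r =>
    1 ≤ r ∧ ∀ k, 1 ≤ k → k ≤ r → σ (cyc i k) = true).card

/-- The amplitude `λ_{m(i,σ),n(i,σ)}` for inserting a particle at site `i` of the
closed (periodic) chain. -/
def AmpP {N : ℕ} (lam : ℕ → ℕ → ℝ) (σ : Config N) (i : Fin N) : ℂ :=
  ((lam (lrunP σ i + rrunP σ i + 1) (lrunP σ i + 1) : ℝ) : ℂ)

open Function

theorem update_true_apply_eq_true {N : ℕ} {σ : Config N} {i x : Fin N} :
    update σ i true x = true ↔ x = i ∨ σ x = true := by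
  rw [update_apply]
  split_ifs with h <;> simp [h]

theorem update_true_of_true {N : ℕ} {σ : Config N} {i x : Fin N} (h : σ x = true) :
    update σ i true x = true :=
  update_true_apply_eq_true.2 (.inr h)

theorem update_true_apply_eq_false {N : ℕ} {σ : Config N} {i x : Fin N} :
    update σ i true x = false ↔ x ≠ i ∧ σ x = false := by
  simp only [← Bool.not_eq_true, update_true_apply_eq_true, not_or]

theorem sum_sum_eq_zero_of_antisymm {ι M : Type*} [AddCommGroup M] [IsAddTorsionFree M]
    (s : Finset ι) {f : ι → ι → M} (h : ∀ i j, f i j = -f j i) :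
    ∑ i ∈ s, ∑ j ∈ s, f i j = 0 := by
  rw [← self_eq_neg]
  nth_rw 2 [Finset.sum_comm]
  simp only [← Finset.sum_neg_distrib]
  exact Finset.sum_congr rfl fun i _ => Finset.sum_congr rfl fun j _ => h i j

section Sign

variable {N : ℕ} (σ : Config N) {i j : Fin N}

theorem card_filter_lt_update (hi : σ i = false) :
    (Finset.univ.filter fun k => k < j ∧ update σ i true k = true).card =
      (Finset.univ.filter fun k => k < j ∧ σ k = true).card + if i < j then 1 else 0 := by
  split_ifs with hlt
  · rw [← Finset.card_insert_of_notMem (a := i) (by simp [hi])]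
    congr 1
    ext k
    by_cases hk : k = i <;> simp_all [update_true_apply_eq_true]
  · rw [add_zero]
    congr 1
    ext k
    by_cases hk : k = i <;> simp_all [update_true_apply_eq_true]

theorem sgn_update (hi : σ i = false) :
    sgn (update σ i true) j = (if i < j then -1 else 1) * sgn σ j := by
  rw [sgn, sgn, card_filter_lt_update σ hi, pow_add, mul_comm]
  split_ifs <;> simp

theorem sgn_update_mul_sgn_anticomm (hij : i ≠ j) (hi : σ i = false) (hj : σ j = false) :
    sgn (update σ j true) i * sgn σ j = -(sgn (update σ i true) j * sgn σ i) := by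
  rw [sgn_update σ hj, sgn_update σ hi]
  rcases lt_or_gt_of_ne hij with h | h <;> simp only [h, asymm h, if_true, if_false] <;> ring

end Sign

def IsDownwardClosed {N : ℕ} (OK : Config N → Prop) : Prop :=
  ∀ (σ : Config N) (i : Fin N), σ i = false → OK (update σ i true) → OK σ

def IsExchangeSymmetric {N : ℕ} (OK : Config N → Prop) (A : Config N → Fin N → ℂ) : Prop :=
  ∀ (σ : Config N) (i j : Fin N), i ≠ j → σ i = false → σ j = false →
    OK (update (update σ i true) j true) →
    A σ i * A (update σ i true) j = A σ j * A (update σ j true) i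

theorem isDownwardClosed_openOK {N ℓ c₁ cN : ℕ} : IsDownwardClosed (OpenOK N ℓ c₁ cN) := by
  intro σ i _ ⟨h1, h2, h3⟩
  have hmono : ∀ t, extc σ t = true → extc (update σ i true) t = true := fun t ht => by
    unfold extc at ht ⊢
    split_ifs at ht ⊢
    exact update_true_of_true ht
  exact ⟨fun a ha => h1 a fun k hk => hmono _ (ha k hk),
    fun hc => h2 ⟨hc.1, fun k hk => hmono _ (hc.2 k hk)⟩,
    fun hc => h3 ⟨hc.1, fun k hk => hmono _ (hc.2 k hk)⟩⟩

theorem isDownwardClosed_perOK {N ℓ : ℕ} : IsDownwardClosed (PerOK N ℓ) := by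
  intro σ i _ h p
  obtain ⟨k, hk, hv⟩ := h p
  exact ⟨k, hk, (update_true_apply_eq_false.1 hv).2⟩

section Supercharge

variable {N : ℕ} {OK : Config N → Prop} {S : Fin N → Prop} {A : Config N → Fin N → ℂ}

variable (N OK S A) in
def insertMat (i : Fin N) : Matrix {σ : Config N // OK σ} {σ : Config N // OK σ} ℂ :=
  fun τ σ => if S i ∧ σ.1 i = false ∧ τ.1 = update σ.1 i true then A σ.1 i * sgn σ.1 i else 0

theorem qmatA_eq_sum_insertMat : QmatA N OK S A = ∑ i, insertMat N OK S A i := by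
  ext τ σ
  rw [Matrix.sum_apply]
  rfl

theorem insertMat_mul_apply (i j : Fin N) (τ σ : {σ : Config N // OK σ}) :
    (insertMat N OK S A i * insertMat N OK S A j) τ σ =
      if S i ∧ S j ∧ i ≠ j ∧ σ.1 i = false ∧ σ.1 j = false ∧ OK (update σ.1 j true) ∧
          τ.1 = update (update σ.1 j true) i true
      then A (update σ.1 j true) i * sgn (update σ.1 j true) i * (A σ.1 j * sgn σ.1 j)
      else 0 := by
  rw [Matrix.mul_apply]
  by_cases hOK : OK (update σ.1 j true)
  · rw [Fintype.sum_eq_single ⟨_, hOK⟩ fun μ hμ => ?_]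
    · simp only [insertMat, update_true_apply_eq_false, and_true]
      split_ifs <;> simp_all
    · exact mul_eq_zero_of_right _ (if_neg fun h => hμ (Subtype.ext h.2.2))
  · rw [if_neg fun h => hOK h.2.2.2.2.2.1]
    refine Finset.sum_eq_zero fun μ _ => ?_
    exact mul_eq_zero_of_right _ (if_neg fun h : S j ∧ σ.1 j = false ∧ μ.1 = update σ.1 j true =>
      hOK (h.2.2 ▸ μ.2))

theorem insertMat_mul_anticomm
    (hdown : IsDownwardClosed OK) (hA : IsExchangeSymmetric OK A)
    (i j : Fin N) :
    insertMat N OK S A i * insertMat N OK S A j =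
      -(insertMat N OK S A j * insertMat N OK S A i) := by
  ext τ σ
  rw [Matrix.neg_apply, insertMat_mul_apply, insertMat_mul_apply]
  by_cases h : S i ∧ S j ∧ i ≠ j ∧ σ.1 i = false ∧ σ.1 j = false ∧
      τ.1 = update (update σ.1 j true) i true
  · obtain ⟨hSi, hSj, hij, hi, hj, hτ⟩ := h
    have hτ' : τ.1 = update (update σ.1 i true) j true := hτ.trans (update_comm hij.symm _ _ _)
    have hOKj := hdown _ i (by rwa [update_of_ne hij]) (hτ ▸ τ.2)
    have hOKi := hdown _ j (by rwa [update_of_ne hij.symm]) (hτ' ▸ τ.2)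
    rw [if_pos ⟨hSi, hSj, hij, hi, hj, hOKj, hτ⟩, if_pos ⟨hSj, hSi, hij.symm, hj, hi, hOKi, hτ'⟩]
    linear_combination A σ.1 j * A (update σ.1 j true) i *
        sgn_update_mul_sgn_anticomm σ.1 hij hi hj +
      sgn (update σ.1 i true) j * sgn σ.1 i * hA σ.1 i j hij hi hj (hτ' ▸ τ.2)
  · rw [if_neg fun ⟨hSi, hSj, hij, hi, hj, _, hτ⟩ => h ⟨hSi, hSj, hij, hi, hj, hτ⟩,
      if_neg fun ⟨hSj, hSi, hji, hj, hi, _, hτ⟩ =>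
        h ⟨hSi, hSj, hji.symm, hi, hj, hτ.trans (update_comm hji.symm _ _ _)⟩, neg_zero]

theorem qopA_comp_self_eq_zero
    (hdown : IsDownwardClosed OK) (hA : IsExchangeSymmetric OK A) :
    QopA N OK S A ∘ₗ QopA N OK S A = 0 := by
  have hQ : QmatA N OK S A * QmatA N OK S A = 0 := by
    ext τ σ
    rw [qmatA_eq_sum_insertMat, Finset.sum_mul_sum, Matrix.sum_apply, Matrix.zero_apply]
    simp only [Matrix.sum_apply]
    exact sum_sum_eq_zero_of_antisymm _ fun i j => by
      rw [insertMat_mul_anticomm hdown hA, Matrix.neg_apply]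
  rw [QopA, ← Matrix.mulVecLin_mul, hQ, Matrix.mulVecLin_zero]

end Supercharge

def runLength (N : ℕ) (occ : ℕ → Prop) : ℕ :=
  ((Finset.range N).filter fun r => 1 ≤ r ∧ ∀ k, 1 ≤ k → k ≤ r → occ k).card

theorem runLength_eq {N L : ℕ} {occ : ℕ → Prop} (hocc : ∀ k, 1 ≤ k → k ≤ L → occ k)
    (hL : ¬ occ (L + 1)) (hLN : L < N) : runLength N occ = L := by
  have hrun : (Finset.range N).filter (fun r => 1 ≤ r ∧ ∀ k, 1 ≤ k → k ≤ r → occ k) =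
      Finset.Icc 1 L := by
    ext r
    simp only [Finset.mem_filter, Finset.mem_range, Finset.mem_Icc]
    constructor
    · rintro ⟨-, h1, hr⟩
      refine ⟨h1, ?_⟩
      by_contra! h
      exact hL (hr (L + 1) (by omega) h)
    · rintro ⟨h1, hr⟩
      exact ⟨by omega, h1, fun k hk1 hk2 => hocc k hk1 (hk2.trans hr)⟩
  rw [runLength, hrun, Nat.card_Icc, Nat.add_sub_cancel]

theorem runLength_spec {N m : ℕ} {occ : ℕ → Prop} (hm1 : 1 ≤ m) (hmN : m ≤ N) (hm : ¬ occ m) :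
    (∀ k, 1 ≤ k → k ≤ runLength N occ → occ k) ∧ ¬ occ (runLength N occ + 1) ∧
      runLength N occ < m := by
  have hex : ∃ L, ¬ occ (L + 1) := ⟨m - 1, by rwa [Nat.sub_add_cancel hm1]⟩
  have hLm : Nat.find hex < m := by
    have := Nat.find_min' hex (m := m - 1) (by rwa [Nat.sub_add_cancel hm1])
    omega
  have hocc : ∀ k, 1 ≤ k → k ≤ Nat.find hex → occ k := fun k hk1 hk2 => by
    have := Nat.find_min hex (m := k - 1) (by omega)
    rwa [Nat.sub_add_cancel hk1, not_not] at this
  rw [runLength_eq hocc (Nat.find_spec hex) (by omega)]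
  exact ⟨hocc, Nat.find_spec hex, hLm⟩

theorem runLength_congr {N N' m : ℕ} {occ occ' : ℕ → Prop} (hm1 : 1 ≤ m) (hmN : m ≤ N)
    (hmN' : m ≤ N') (hm : ¬ occ m) (h : ∀ k, 1 ≤ k → k ≤ m → (occ k ↔ occ' k)) :
    runLength N occ = runLength N' occ' := by
  obtain ⟨hocc, hL, hLm⟩ := runLength_spec hm1 hmN hm
  exact (runLength_eq (fun k hk1 hk2 => (h k hk1 (by omega)).1 (hocc k hk1 hk2))
    (fun h' => hL ((h _ (by omega) (by omega)).2 h')) (by omega)).symm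

section Cyc

variable {N : ℕ}

theorem cyc_congr (i : Fin N) {k l : ℕ} (h : k % N = l % N) : cyc i k = cyc i l := by
  ext
  simp only [cyc, Nat.add_mod i.1 k, Nat.add_mod i.1 l, h]

theorem cyc_zero (i : Fin N) : cyc i 0 = i :=
  Fin.ext (Nat.mod_eq_of_lt i.2)

theorem cyc_N (i : Fin N) : cyc i N = i := by
  rw [cyc_congr i (by simp : N % N = 0 % N), cyc_zero]

theorem cyc_N_add (i : Fin N) (k : ℕ) : cyc i (N + k) = cyc i k :=
  cyc_congr i (Nat.add_mod_left N k)

theorem cyc_add (i : Fin N) (k l : ℕ) : cyc (cyc i k) l = cyc i (k + l) := by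
  ext
  simp only [cyc, Nat.mod_add_mod, Nat.add_assoc]

theorem cyc_ne_self (i : Fin N) {t : ℕ} (h1 : 1 ≤ t) (h2 : t < N) : cyc i t ≠ i := by
  intro h
  have := congrArg Fin.val h
  simp only [cyc] at this
  have := i.2
  rcases lt_or_ge (i.1 + t) N with h3 | h3
  · rw [Nat.mod_eq_of_lt h3] at *; omega
  · rw [Nat.mod_eq_sub_mod h3, Nat.mod_eq_of_lt (by omega)] at *; omega

theorem exists_cyc_eq {i j : Fin N} (h : i ≠ j) : ∃ t, 1 ≤ t ∧ t < N ∧ cyc i t = j := by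
  have hi := i.2
  have hj := j.2
  have hij : i.1 ≠ j.1 := fun h' => h (Fin.ext h')
  rcases le_or_gt i.1 j.1 with hle | hlt
  · refine ⟨j.1 - i.1, by omega, by omega, Fin.ext ?_⟩
    simp only [cyc]
    rw [Nat.add_sub_cancel' hle, Nat.mod_eq_of_lt hj]
  · refine ⟨j.1 + N - i.1, by omega, by omega, Fin.ext ?_⟩
    simp only [cyc]
    rw [show i.1 + (j.1 + N - i.1) = j.1 + N by omega, Nat.add_mod_right, Nat.mod_eq_of_lt hj]

end Cyc
section PeriodicRuns

variable {N : ℕ} {σ : Config N} {i j : Fin N}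

theorem lrunP_spec (hi : σ i = false) :
    (∀ k, 1 ≤ k → k ≤ lrunP σ i → σ (cyc i (N - k)) = true) ∧
      σ (cyc i (N - (lrunP σ i + 1))) = false ∧ lrunP σ i < N := by
  obtain ⟨hrun, hend, hlt⟩ := runLength_spec (occ := fun k => σ (cyc i (N - k)) = true)
    i.pos le_rfl (by simp [cyc_zero, hi])
  exact ⟨hrun, Bool.not_eq_true _ ▸ hend, hlt⟩

theorem rrunP_spec (hi : σ i = false) :
    (∀ k, 1 ≤ k → k ≤ rrunP σ i → σ (cyc i k) = true) ∧
      σ (cyc i (rrunP σ i + 1)) = false ∧ rrunP σ i < N := by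
  obtain ⟨hrun, hend, hlt⟩ := runLength_spec (occ := fun k => σ (cyc i k) = true)
    i.pos le_rfl (by simp [cyc_N, hi])
  exact ⟨hrun, Bool.not_eq_true _ ▸ hend, hlt⟩

theorem lrunP_eq_of_run (hi : σ i = false) {L : ℕ}
    (hrun : ∀ k, 1 ≤ k → k ≤ L → σ (cyc i (N - k)) = true)
    (hend : σ (cyc i (N - (L + 1))) = false) : lrunP σ i = L := by
  refine runLength_eq hrun (by simp [hend]) (Nat.lt_of_not_le fun hL => ?_)
  have := hrun N i.pos hL
  simp [cyc_zero, hi] at this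

theorem rrunP_eq_of_run (hi : σ i = false) {L : ℕ}
    (hrun : ∀ k, 1 ≤ k → k ≤ L → σ (cyc i k) = true)
    (hend : σ (cyc i (L + 1)) = false) : rrunP σ i = L := by
  refine runLength_eq hrun (by simp [hend]) (Nat.lt_of_not_le fun hL => ?_)
  have := hrun N i.pos hL
  simp [cyc_N, hi] at this

theorem lrunP_add_one_lt (hj : σ j = false) (hij : i ≠ j) : lrunP σ i + 1 < N := by
  obtain ⟨t, ht1, htN, rfl⟩ := exists_cyc_eq hij
  have := (runLength_spec (N := N) (m := N - t) (occ := fun k => σ (cyc i (N - k)) = true)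
    (by omega) (by omega) (by simp [Nat.sub_sub_self htN.le, hj])).2.2
  exact lt_of_lt_of_le (Nat.add_lt_add_right this 1) (by omega)

theorem rrunP_add_one_lt (hj : σ j = false) (hij : i ≠ j) : rrunP σ i + 1 < N := by
  obtain ⟨t, ht1, htN, rfl⟩ := exists_cyc_eq hij
  have := (runLength_spec (N := N) (occ := fun k => σ (cyc i k) = true)
    ht1 htN.le (by simp [hj])).2.2
  exact lt_of_lt_of_le (Nat.add_lt_add_right this 1) htN

end PeriodicRuns

section PeriodicUpdate

variable {N : ℕ} {σ : Config N} {i j : Fin N}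

theorem lrunP_eq_rrunP_of_next (hi : σ i = false) (hj : σ j = false)
    (h : cyc i (rrunP σ i + 1) = j) : lrunP σ j = rrunP σ i := by
  obtain ⟨hrun, -, hb⟩ := rrunP_spec hi
  set b := rrunP σ i
  subst h
  refine lrunP_eq_of_run hj (fun k hk1 hk2 => ?_) ?_
  · rw [cyc_add, show b + 1 + (N - k) = N + (b + 1 - k) by omega, cyc_N_add]
    exact hrun _ (by omega) (by omega)
  · rw [cyc_add, show b + 1 + (N - (b + 1)) = N by omega, cyc_N, hi]

theorem rrunP_eq_lrunP_of_prev (hi : σ i = false) (hj : σ j = false)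
    (h : cyc j (N - (lrunP σ j + 1)) = i) : rrunP σ i = lrunP σ j := by
  obtain ⟨hrun, -, hc⟩ := lrunP_spec hj
  set c := lrunP σ j
  subst h
  refine rrunP_eq_of_run hi (fun k hk1 hk2 => ?_) ?_
  · rw [cyc_add, show N - (c + 1) + k = N - (c + 1 - k) by omega]
    exact hrun _ (by omega) (by omega)
  · rw [cyc_add, show N - (c + 1) + (c + 1) = N by omega, cyc_N, hj]

theorem lrunP_update_of_ne (hi : σ i = false) (hj : σ j = false) (hij : i ≠ j)
    (h : cyc i (rrunP σ i + 1) ≠ j) : lrunP (update σ i true) j = lrunP σ j := by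
  obtain ⟨hrun, hend, hc⟩ := lrunP_spec hj
  refine lrunP_eq_of_run (by rwa [update_of_ne hij.symm])
    (fun k hk1 hk2 => update_true_of_true (hrun k hk1 hk2)) ?_
  rw [update_of_ne fun hprev => h ?_, hend]
  rw [rrunP_eq_lrunP_of_prev hi hj hprev, ← hprev, cyc_add,
    show N - (lrunP σ j + 1) + (lrunP σ j + 1) = N by omega, cyc_N]

theorem rrunP_update_of_ne (hj : σ j = false) (hij : i ≠ j)
    (h : cyc j (rrunP σ j + 1) ≠ i) : rrunP (update σ i true) j = rrunP σ j := by
  obtain ⟨hrun, hend, -⟩ := rrunP_spec hj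
  refine rrunP_eq_of_run (by rwa [update_of_ne hij.symm])
    (fun k hk1 hk2 => update_true_of_true (hrun k hk1 hk2)) ?_
  rwa [update_of_ne h]

theorem lrunP_update_of_next (hi : σ i = false) (hj : σ j = false) (hij : i ≠ j)
    (h : cyc i (rrunP σ i + 1) = j) :
    lrunP (update σ i true) j = lrunP σ i + rrunP σ i + 1 := by
  obtain ⟨hlrun, hlend, -⟩ := lrunP_spec hi
  obtain ⟨hrrun, -, -⟩ := rrunP_spec hi
  have ha := lrunP_add_one_lt hj hij
  have hb := rrunP_add_one_lt hj hij
  set a := lrunP σ i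
  set b := rrunP σ i
  have hab : a + b + 2 ≤ N := by
    by_contra! hN
    have := hlrun (N - (b + 1)) (by omega) (by omega)
    rw [show N - (N - (b + 1)) = b + 1 by omega, h, hj] at this
    exact Bool.false_ne_true this
  subst h
  refine lrunP_eq_of_run (by rwa [update_of_ne hij.symm]) (fun k hk1 hk2 => ?_) ?_
  · rw [update_true_apply_eq_true, cyc_add]
    rcases lt_trichotomy k (b + 1) with hk | rfl | hk
    · right
      rw [show b + 1 + (N - k) = N + (b + 1 - k) by omega, cyc_N_add]
      exact hrrun _ (by omega) (by omega)
    · left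
      rw [show b + 1 + (N - (b + 1)) = N by omega, cyc_N]
    · right
      rw [show b + 1 + (N - k) = N - (k - (b + 1)) by omega]
      exact hlrun _ (by omega) (by omega)
  · rw [cyc_add, show b + 1 + (N - (a + b + 1 + 1)) = N - (a + 1) by omega,
      update_of_ne (cyc_ne_self i (by omega) (by omega)), hlend]

theorem rrunP_update_of_next (hi : σ i = false) (hj : σ j = false) (hij : i ≠ j)
    (h : cyc j (rrunP σ j + 1) = i) :
    rrunP (update σ i true) j = rrunP σ j + 1 + rrunP σ i := by
  obtain ⟨hrunj, -, -⟩ := rrunP_spec hj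
  obtain ⟨hruni, hendi, -⟩ := rrunP_spec hi
  have hb := rrunP_add_one_lt hj hij
  set b := rrunP σ i
  set d := rrunP σ j
  refine rrunP_eq_of_run (by rwa [update_of_ne hij.symm]) (fun k hk1 hk2 => ?_) ?_
  · rw [update_true_apply_eq_true]
    rcases lt_trichotomy k (d + 1) with hk | rfl | hk
    · exact .inr (hrunj k hk1 (by omega))
    · exact .inl h
    · right
      rw [show k = d + 1 + (k - (d + 1)) by omega, ← cyc_add, h]
      exact hruni _ (by omega) (by omega)
  · rw [show d + 1 + b + 1 = d + 1 + (b + 1) by omega, ← cyc_add, h,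
      update_of_ne (cyc_ne_self i (by omega) hb), hendi]

theorem lrunP_add_rrunP_add_one_le {ℓ : ℕ} (hi : σ i = false)
    (hOK : PerOK N ℓ (update σ i true)) : lrunP σ i + rrunP σ i + 1 ≤ ℓ := by
  obtain ⟨hl, -, ha⟩ := lrunP_spec hi
  obtain ⟨hr, -, -⟩ := rrunP_spec hi
  set a := lrunP σ i
  set b := rrunP σ i
  obtain ⟨k, hkℓ, hk⟩ := hOK (cyc i (N - a))
  suffices a + b < k by omega
  by_contra! hle
  rw [cyc_add, ← Bool.not_eq_true, update_true_apply_eq_true] at hk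
  apply hk
  rcases lt_trichotomy k a with h | h | h
  · right
    rw [show N - a + k = N - (a - k) by omega]
    exact hl _ (by omega) (by omega)
  · left
    rw [show N - a + k = N by omega, cyc_N]
  · right
    rw [show N - a + k = N + (k - a) by omega, cyc_N_add]
    exact hr _ (by omega) (by omega)

/-- Otherwise filling both `i` and `j` would fill the whole ring. -/
theorem cyc_rrunP_ne_of_next {ℓ : ℕ} (hi : σ i = false) (hj : σ j = false) (hij : i ≠ j)
    (hOK : PerOK N ℓ (update (update σ i true) j true)) (h : cyc i (rrunP σ i + 1) = j) :
    cyc j (rrunP σ j + 1) ≠ i := by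
  intro h'
  have hrun := (rrunP_spec (σ := update σ i true) (i := j) (by rwa [update_of_ne hij.symm])).1
  rw [rrunP_update_of_next hi hj hij h'] at hrun
  have hcycle : N ≤ rrunP σ j + 1 + rrunP σ i + 1 := by
    by_contra! hlt
    apply cyc_ne_self j (by omega) hlt
    rw [show rrunP σ j + 1 + rrunP σ i + 1 = rrunP σ j + 1 + (rrunP σ i + 1) by omega,
      ← cyc_add, h', h]
  obtain ⟨k, -, hk⟩ := hOK j
  rw [cyc_congr j (Nat.mod_mod k N).symm] at hk
  rcases Nat.eq_zero_or_pos (k % N) with h0 | hpos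
  · rw [h0, cyc_zero, update_self] at hk
    exact absurd hk (by decide)
  · have := update_true_of_true (i := j)
      (hrun (k % N) hpos (by have := Nat.mod_lt k i.pos; omega))
    rw [hk] at this
    exact Bool.false_ne_true this

end PeriodicUpdate

def IsCompatible (ℓ : ℕ) (lam : ℕ → ℕ → ℝ) : Prop :=
  ∀ m n p : ℕ, 1 ≤ n → n < p → p ≤ m → m ≤ ℓ →
    lam m n * lam (m - n) (p - n) = lam m p * lam (p - 1) n

theorem IsCompatible.merge {ℓ : ℕ} {lam : ℕ → ℕ → ℝ} (hcompat : IsCompatible ℓ lam)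
    {a b d : ℕ} (h : a + b + d + 2 ≤ ℓ) :
    lam (a + b + 1) (a + 1) * lam (a + b + d + 2) (a + b + 2) =
      lam (b + d + 1) (b + 1) * lam (a + b + d + 2) (a + 1) := by
  have := hcompat (a + b + d + 2) (a + 1) (a + b + 2) (by omega) (by omega) (by omega) h
  rw [show a + b + d + 2 - (a + 1) = b + d + 1 by omega, show a + b + 2 - (a + 1) = b + 1 by omega,
    show a + b + 2 - 1 = a + b + 1 by omega] at this
  linear_combination -this

section PeriodicAmplitude

variable {N ℓ : ℕ} {lam : ℕ → ℕ → ℝ} {σ : Config N} {i j : Fin N}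

theorem ampP_comm_of_next (hcompat : IsCompatible ℓ lam) (hi : σ i = false)
    (hj : σ j = false) (hij : i ≠ j) (h : cyc i (rrunP σ i + 1) = j)
    (hOK : PerOK N ℓ (update (update σ i true) j true)) :
    AmpP lam σ i * AmpP lam (update σ i true) j = AmpP lam σ j * AmpP lam (update σ j true) i := by
  have h' := cyc_rrunP_ne_of_next hi hj hij hOK h
  have hbound := lrunP_add_rrunP_add_one_le (by rwa [update_of_ne hij.symm]) hOK
  rw [lrunP_update_of_next hi hj hij h, rrunP_update_of_ne hj hij h'] at hbound
  simp only [AmpP, lrunP_update_of_next hi hj hij h, rrunP_update_of_ne hj hij h',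
    lrunP_eq_rrunP_of_next hi hj h, lrunP_update_of_ne hj hi hij.symm h',
    rrunP_update_of_next hj hi hij.symm h]
  set a := lrunP σ i
  set b := rrunP σ i
  set d := rrunP σ j
  rw [show a + b + 1 + d + 1 = a + b + d + 2 by ring, show a + b + 1 + 1 = a + b + 2 by ring,
    show a + (b + 1 + d) + 1 = a + b + d + 2 by ring]
  exact_mod_cast hcompat.merge (by omega)

theorem ampP_comm_of_not_next (hi : σ i = false) (hj : σ j = false) (hij : i ≠ j)
    (hij' : cyc i (rrunP σ i + 1) ≠ j) (hji' : cyc j (rrunP σ j + 1) ≠ i) :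
    AmpP lam σ i * AmpP lam (update σ i true) j = AmpP lam σ j * AmpP lam (update σ j true) i := by
  simp only [AmpP, lrunP_update_of_ne hi hj hij hij', rrunP_update_of_ne hj hij hji',
    lrunP_update_of_ne hj hi hij.symm hji', rrunP_update_of_ne hi hij.symm hij']
  ring

theorem isExchangeSymmetric_ampP (hcompat : IsCompatible ℓ lam) :
    IsExchangeSymmetric (PerOK N ℓ) (AmpP lam) := fun σ i j hij hi hj hOK => by
  by_cases h : cyc i (rrunP σ i + 1) = j
  · exact ampP_comm_of_next hcompat hi hj hij h hOK
  by_cases h' : cyc j (rrunP σ j + 1) = i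
  · rw [update_comm hij] at hOK
    exact (ampP_comm_of_next hcompat hj hi hij.symm h' hOK).symm
  exact ampP_comm_of_not_next hi hj hij h h'

end PeriodicAmplitude

section OpenChain

variable {N : ℕ}

def extendEmpty (σ : Config N) : Config (N + 1) := fun x => extc σ x.1

theorem extendEmpty_castSucc (σ : Config N) (i : Fin N) : extendEmpty σ i.castSucc = σ i := by
  simp [extendEmpty, extc]

theorem extendEmpty_update (σ : Config N) (i : Fin N) (v : Bool) :
    extendEmpty (update σ i v) = update (extendEmpty σ) i.castSucc v := by
  funext x
  by_cases hx : x.1 < N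
  · obtain ⟨y, rfl⟩ : ∃ y : Fin N, y.castSucc = x := ⟨⟨x.1, hx⟩, rfl⟩
    simp only [extendEmpty_castSucc, update_apply, Fin.castSucc_inj]
  · have hne : x ≠ i.castSucc := fun h => hx (h ▸ i.castSucc_lt_last)
    simp [extendEmpty, extc, hx, update_of_ne hne]

theorem lrunO_eq_lrunP_extendEmpty (σ : Config N) (i : Fin N) :
    lrunO σ i = lrunP (extendEmpty σ) i.castSucc := by
  have hO : lrunO σ i = runLength N (fun k => k ≤ i.1 ∧ extc σ (i.1 - k) = true) := by
    unfold lrunO runLength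
    congr 1
    ext r
    simp only [Finset.mem_filter, and_congr_right_iff]
    refine fun _ h1 => ⟨fun ⟨hr, hall⟩ k hk1 hk2 => ⟨hk2.trans hr, hall k hk1 hk2⟩, fun hall => ?_⟩
    exact ⟨(hall r h1 le_rfl).1, fun k hk1 hk2 => (hall k hk1 hk2).2⟩
  rw [hO]
  refine runLength_congr (m := i.1 + 1) (by omega) i.2 (by omega) (by simp) fun k hk1 hk2 => ?_
  simp only [extendEmpty, cyc, Fin.val_castSucc]
  rcases Nat.lt_or_ge i.1 k with hk | hk
  · rw [show i.1 + (N + 1 - k) = N by omega, Nat.mod_eq_of_lt N.lt_succ_self]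
    simp [extc, Nat.not_le.2 hk]
  · rw [show i.1 + (N + 1 - k) = N + 1 + (i.1 - k) by omega, Nat.add_mod_left,
      Nat.mod_eq_of_lt (by omega)]
    simp [hk]

theorem rrunO_eq_rrunP_extendEmpty (σ : Config N) (i : Fin N) :
    rrunO σ i = rrunP (extendEmpty σ) i.castSucc := by
  refine runLength_congr (m := N - i.1) (by omega) (by omega) (by omega) ?_ fun k hk1 hk2 => ?_
  · simp [extc, Nat.add_sub_cancel' i.2.le]
  · simp only [extendEmpty, cyc, Fin.val_castSucc, Nat.mod_eq_of_lt (by omega : i.1 + k < N + 1)]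

theorem ampO_eq_ampP_extendEmpty (lam : ℕ → ℕ → ℝ) (σ : Config N) (i : Fin N) :
    AmpO lam σ i = AmpP lam (extendEmpty σ) i.castSucc := by
  simp only [AmpO, AmpP, lrunO_eq_lrunP_extendEmpty, rrunO_eq_rrunP_extendEmpty]

theorem perOK_extendEmpty {ℓ : ℕ} {σ : Config N}
    (h : ∀ a : ℕ, ¬ ∀ k ≤ ℓ, extc σ (a + k) = true) : PerOK (N + 1) ℓ (extendEmpty σ) := by
  intro x
  obtain ⟨k, hkℓ, hk⟩ : ∃ k ≤ ℓ, extc σ (x.1 + k) = false := by simpa using h x.1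
  by_cases hxk : x.1 + k ≤ N
  · exact ⟨k, hkℓ, by simpa [extendEmpty, cyc, Nat.mod_eq_of_lt (Nat.lt_succ_of_le hxk)]⟩
  · refine ⟨N - x.1, by omega, ?_⟩
    simp [extendEmpty, cyc, Nat.add_sub_cancel' (Nat.lt_succ_iff.1 x.2), extc]

theorem isExchangeSymmetric_ampO {ℓ c₁ cN : ℕ} {lam : ℕ → ℕ → ℝ}
    (hcompat : IsCompatible ℓ lam) : IsExchangeSymmetric (OpenOK N ℓ c₁ cN) (AmpO lam) :=
  fun σ i j hij hi hj hOK => by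
    have hOK' := perOK_extendEmpty hOK.1
    rw [extendEmpty_update, extendEmpty_update] at hOK'
    simp only [ampO_eq_ampP_extendEmpty, extendEmpty_update]
    exact isExchangeSymmetric_ampP hcompat _ _ _ (Fin.castSucc_injective N |>.ne hij)
      (by rwa [extendEmpty_castSucc]) (by rwa [extendEmpty_castSucc]) hOK'

end OpenChain

theorem supercharge_squares_to_zero_general (ℓ : ℕ) (lam : ℕ → ℕ → ℝ)
    (hcompat : ∀ m n p : ℕ, 1 ≤ n → n < p → p ≤ m → m ≤ ℓ →
      lam m n * lam (m - n) (p - n) = lam m p * lam (p - 1) n)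
    (N : ℕ) :
    (∀ c₁ cN, c₁ ≤ ℓ → cN ≤ ℓ →
      QopA N (OpenOK N ℓ c₁ cN) (fun _ => True) (AmpO lam) ∘ₗ
        QopA N (OpenOK N ℓ c₁ cN) (fun _ => True) (AmpO lam) = 0) ∧
    QopA N (PerOK N ℓ) (fun _ => True) (AmpP lam) ∘ₗ
      QopA N (PerOK N ℓ) (fun _ => True) (AmpP lam) = 0 :=
  ⟨fun _ _ _ _ => qopA_comp_self_eq_zero isDownwardClosed_openOK (isExchangeSymmetric_ampO hcompat),
    qopA_comp_self_eq_zero isDownwardClosed_perOK (isExchangeSymmetric_ampP hcompat)⟩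

/-- If the amplitudes `λ_{m,n}` (for `1 ≤ n ≤ m ≤ ℓ`) satisfy the compatibility relations
`λ_{m,n} λ_{m−n,p−n} = λ_{m,p} λ_{p−1,n}` for all `1 ≤ n < p ≤ m ≤ ℓ`, then for every
chain length `N` the supercharge `Q_λ` of the `M_ℓ` model is nilpotent of order two,
both with periodic boundary conditions and with any special boundary conditions
`s = (c₁, cN)`, `0 ≤ c₁, cN ≤ ℓ`. -/
theorem supercharge_squares_to_zero (ℓ : ℕ) (hℓ : 1 ≤ ℓ) (lam : ℕ → ℕ → ℝ)
    (hcompat : ∀ m n p : ℕ, 1 ≤ n → n < p → p ≤ m → m ≤ ℓ →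
      lam m n * lam (m - n) (p - n) = lam m p * lam (p - 1) n)
    (N : ℕ) :
    (∀ c₁ cN, c₁ ≤ ℓ → cN ≤ ℓ →
      QopA N (OpenOK N ℓ c₁ cN) (fun _ => True) (AmpO lam) ∘ₗ
        QopA N (OpenOK N ℓ c₁ cN) (fun _ => True) (AmpO lam) = 0) ∧
    QopA N (PerOK N ℓ) (fun _ => True) (AmpP lam) ∘ₗ
      QopA N (PerOK N ℓ) (fun _ => True) (AmpP lam) = 0 :=
  supercharge_squares_to_zero_general ℓ lam hcompat N

end
end

section
/- Let ℓ ≥ 1 and N > 2ℓ+2, with periodic boundary conditions or special boundary conditions s = (c₁, c_N). Then: (a) H_{Q₁}^f = 0 for every f < ℓ; (b) for every f ≥ ℓ, every class in H_{Q₁}^f has a representative of the form G ψ' for some ψ' ∈ V_{Ñ, f−ℓ} (where V_Ñ carries periodic boundary conditions, resp. special boundary conditions (c₁, c_N)), and nonzero classes have such representatives with ψ' ≠ 0. -/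
attribute [local instance 10] Classical.propDecidable

noncomputable section

/-- The cocycles at gradeV `f`: `ker Q ∩ V_{N,f}` (for the supercharge restricted to `S`). -/
def cocycles (N : ℕ) (OK : Config N → Prop) (S : Fin N → Prop) (f : ℕ) :
    Submodule ℂ (AState N OK) :=
  LinearMap.ker (Qop N OK S) ⊓ gradeV N OK f

/-- The coboundaries at gradeV `f`: `Q (V_{N,f-1})` (for the supercharge restricted to `S`). -/
def cobounds (N : ℕ) (OK : Config N → Prop) (S : Fin N → Prop) (f : ℕ) :
    Submodule ℂ (AState N OK) :=
  (gradeV N OK (f - 1)).map (Qop N OK S)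

/-- The cohomology `H_Q^f = ker (Q : V_{N,f} → V_{N,f+1}) / Q (V_{N,f-1})`. -/
abbrev CohSpace (N : ℕ) (OK : Config N → Prop) (S : Fin N → Prop) (f : ℕ) :=
  cocycles N OK S f ⧸ ((cobounds N OK S f).comap (cocycles N OK S f).subtype)

/-- The dimension of `H_Q^f`. -/
def cohDim (N : ℕ) (OK : Config N → Prop) (S : Fin N → Prop) (f : ℕ) : ℕ :=
  Module.finrank ℂ (CohSpace N OK S f)

/-- The cohomology class represented by a cocycle. -/
def cohClass (N : ℕ) (OK : Config N → Prop) (S : Fin N → Prop) (f : ℕ)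
    (ψ : AState N OK) (h : ψ ∈ cocycles N OK S f) : CohSpace N OK S f :=
  Submodule.Quotient.mk ⟨ψ, h⟩

/-- The first sublattice `S₁ = {1, …, ℓ+2}` (the first `ℓ+2` sites). -/
def S1 (N ℓ : ℕ) : Fin N → Prop := fun i => i.1 < ℓ + 2

/-- The second sublattice `S₂ = {ℓ+3, …, N}` (the remaining sites). -/
def S2 (N ℓ : ℕ) : Fin N → Prop := fun i => ℓ + 2 ≤ i.1

/-- The configuration `χ σ'`: the `(ℓ+2)`-site configuration `χ = 0 1…1 0`
followed by the `Ñ`-site configuration `σ'`. -/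
def glue (ℓ Nt : ℕ) (σ : Config Nt) : Config (Nt + (ℓ + 2)) := fun i =>
  if h : i.1 < ℓ + 2 then decide (1 ≤ i.1 ∧ i.1 ≤ ℓ)
  else σ ⟨i.1 - (ℓ + 2), by have h2 := i.isLt; omega⟩

/-- Matrix of the map `G : V_Ñ → V_N`, `e_{σ'} ↦ e_{χ σ'}`. -/
def Gmat (ℓ Nt : ℕ) (OKN : Config (Nt + (ℓ + 2)) → Prop) (OKt : Config Nt → Prop) :
    Matrix {σ : Config (Nt + (ℓ + 2)) // OKN σ} {σ : Config Nt // OKt σ} ℂ :=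
  fun τ σ => if τ.1 = glue ℓ Nt σ.1 then 1 else 0

/-- The linear map `G : V_Ñ → V_N` sending `e_{σ'}` to `e_{χ σ'}`. -/
def Gop (ℓ Nt : ℕ) (OKN : Config (Nt + (ℓ + 2)) → Prop) (OKt : Config Nt → Prop) :
    AState Nt OKt →ₗ[ℂ] AState (Nt + (ℓ + 2)) OKN :=
  (Gmat ℓ Nt OKN OKt).mulVecLin

/-!
For a site `w` of `S₁`, the contraction `K_w F (μ) = ± F (μ + w)` satisfies
`Q₁ K_w + K_w Q₁ = 1` at every configuration where `w` is occupied or can be occupied, so the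
cohomologous cocycle `F - Q₁ K_w F` vanishes there.

Number the sites of `S₁` as `0, …, ℓ+1`. For both boundary conditions a configuration is allowed
iff its tail (the sites outside `S₁`) satisfies a condition `tailOK` and there is a vacancy both
among the sites `0, …, left` and among `ℓ+1-right, …, ℓ+1`, where `left, right ≤ ℓ` depend on the
tail only; such a tail is allowed on the short chain iff `ℓ ≤ left + right`. Contracting
with site `0` and then with site `ℓ+1` leaves a cocycle supported where neither can be occupied,
i.e. where the sites `1, …, left` and `ℓ+1-right, …, ℓ` are occupied. In the tail sectors with
`left + right < ℓ` the site `left + 1` lies outside both windows and a third contraction kills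
the cocycle. In the other sectors the remaining support is `χ` followed by a tail allowed on the
short chain: the cocycle is `G ψ'`, with `f = ℓ + f(ψ')`, so `ψ' = 0` when `f < ℓ`.
-/

namespace Mℓ

section Configurations

variable {N : ℕ}

def occupy (σ : Config N) (i : Fin N) : Config N := Function.update σ i true

def vacate (σ : Config N) (i : Fin N) : Config N := Function.update σ i false

@[simp] lemma occupy_self (σ : Config N) (i : Fin N) : occupy σ i i = true :=
  Function.update_self ..

@[simp] lemma vacate_self (σ : Config N) (i : Fin N) : vacate σ i i = false :=
  Function.update_self ..

lemma occupy_of_ne (σ : Config N) {i j : Fin N} (h : j ≠ i) : occupy σ i j = σ j :=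
  Function.update_of_ne h ..

lemma vacate_of_ne (σ : Config N) {i j : Fin N} (h : j ≠ i) : vacate σ i j = σ j :=
  Function.update_of_ne h ..

lemma occupy_vacate {σ : Config N} {i : Fin N} (h : σ i = true) : occupy (vacate σ i) i = σ := by
  rw [occupy, vacate, Function.update_idem, ← h, Function.update_eq_self]

lemma vacate_occupy {σ : Config N} {i : Fin N} (h : σ i = false) : vacate (occupy σ i) i = σ := by
  rw [occupy, vacate, Function.update_idem, ← h, Function.update_eq_self]

lemma vacate_occupy_comm (σ : Config N) {i w : Fin N} (h : i ≠ w) :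
    vacate (occupy σ w) i = occupy (vacate σ i) w :=
  Function.update_comm h.symm ..

lemma eq_occupy_iff {σ τ : Config N} {i : Fin N} :
    (σ i = false ∧ τ = occupy σ i) ↔ (τ i = true ∧ σ = vacate τ i) := by
  constructor
  · rintro ⟨h, rfl⟩
    exact ⟨occupy_self σ i, (vacate_occupy h).symm⟩
  · rintro ⟨h, rfl⟩
    exact ⟨vacate_self τ i, (occupy_vacate h).symm⟩

lemma fermions_occupy {σ : Config N} {w : Fin N} (h : σ w = false) :
    fermions (occupy σ w) = fermions σ + 1 := by
  have hset : (Finset.univ.filter fun i => occupy σ w i = true)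
      = insert w (Finset.univ.filter fun i => σ i = true) := by
    ext j
    by_cases hj : j = w
    · simp [hj]
    · simp [occupy_of_ne σ hj, hj]
  rw [fermions, hset, Finset.card_insert_of_notMem (by simp [h]), fermions]

lemma fermions_vacate {σ : Config N} {w : Fin N} (h : σ w = true) :
    fermions (vacate σ w) + 1 = fermions σ := by
  rw [← fermions_occupy (vacate_self σ w), occupy_vacate h]

end Configurations

section Signs

variable {N : ℕ}

lemma sgn_mul_self (σ : Config N) (i : Fin N) : sgn σ i * sgn σ i = 1 := by
  rw [sgn, ← pow_add, Even.neg_one_pow ⟨_, rfl⟩]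

lemma sgn_update_of_le (σ : Config N) {w i : Fin N} (b : Bool) (h : i ≤ w) :
    sgn (Function.update σ w b) i = sgn σ i := by
  unfold sgn
  congr 2
  refine Finset.filter_congr fun j _ => and_congr_right fun hj => ?_
  rw [Function.update_of_ne (hj.trans_le h).ne]

lemma sgn_vacate_of_le (σ : Config N) {w i : Fin N} (h : i ≤ w) : sgn (vacate σ w) i = sgn σ i :=
  sgn_update_of_le σ false h

lemma sgn_occupy_of_le (σ : Config N) {w i : Fin N} (h : i ≤ w) : sgn (occupy σ w) i = sgn σ i :=
  sgn_update_of_le σ true h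

@[simp] lemma sgn_vacate_self (σ : Config N) (i : Fin N) : sgn (vacate σ i) i = sgn σ i :=
  sgn_vacate_of_le σ le_rfl

lemma sgn_vacate_of_lt {σ : Config N} {w i : Fin N} (hw : w < i) (ho : σ w = true) :
    sgn (vacate σ w) i = -sgn σ i := by
  have hset : (Finset.univ.filter fun j => j < i ∧ vacate σ w j = true)
      = (Finset.univ.filter fun j => j < i ∧ σ j = true).erase w := by
    ext j
    by_cases hj : j = w
    · simp [hj]
    · simp [vacate_of_ne σ hj, hj]
  have hmem : w ∈ Finset.univ.filter fun j => j < i ∧ σ j = true := by simp [hw, ho]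
  rw [sgn, sgn, hset, ← Finset.card_erase_add_one hmem, pow_succ, mul_neg_one, neg_neg]

lemma sgn_occupy_of_lt {σ : Config N} {w i : Fin N} (hw : w < i) (ho : σ w = false) :
    sgn (occupy σ w) i = -sgn σ i := by
  rw [← neg_neg (sgn (occupy σ w) i), ← sgn_vacate_of_lt hw (occupy_self σ w), vacate_occupy ho]

lemma sgn_vacate_vacate_antisymm {σ : Config N} {i j : Fin N} (hij : i ≠ j)
    (hi : σ i = true) (hj : σ j = true) :
    sgn (vacate σ i) i * sgn (vacate (vacate σ i) j) j
      = -(sgn (vacate σ j) j * sgn (vacate (vacate σ j) i) i) := by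
  simp only [sgn_vacate_self]
  rcases hij.lt_or_gt with h | h
  · rw [sgn_vacate_of_lt h hi, sgn_vacate_of_le σ h.le]; ring
  · rw [sgn_vacate_of_lt h hj, sgn_vacate_of_le σ h.le]; ring

lemma sgn_vacate_occupy_antisymm {σ : Config N} {i w : Fin N} (hiw : i ≠ w)
    (hi : σ i = true) (hw : σ w = false) :
    sgn (vacate σ i) i * sgn (vacate σ i) w = -(sgn σ w * sgn (vacate (occupy σ w) i) i) := by
  simp only [sgn_vacate_self]
  rcases hiw.lt_or_gt with h | h
  · rw [sgn_vacate_of_lt h hi, sgn_occupy_of_le σ h.le]; ring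
  · rw [sgn_vacate_of_le σ h.le, sgn_occupy_of_lt h hw]; ring

end Signs

section Supercharge

variable {N : ℕ} (S : Fin N → Prop)

/-- `Q_S` on functions of all configurations; `Qop_apply` identifies `Qop` with its restriction
to the allowed ones. -/
def supercharge (F : Config N → ℂ) (τ : Config N) : ℂ :=
  ∑ i, if S i ∧ τ i = true then sgn (vacate τ i) i * F (vacate τ i) else 0

def extendByZero {OK : Config N → Prop} (ψ : AState N OK) (σ : Config N) : ℂ :=
  if h : OK σ then ψ ⟨σ, h⟩ else 0

lemma sum_ite_val_eq_mul {OK : Config N → Prop} (ψ : AState N OK) (x : Config N) (c : ℂ) :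
    ∑ σ : {σ // OK σ}, (if σ.1 = x then c else 0) * ψ σ = c * extendByZero ψ x := by
  by_cases hx : OK x
  · rw [Finset.sum_eq_single ⟨x, hx⟩ (fun σ _ hσ => by rw [if_neg (hσ ∘ Subtype.ext), zero_mul])
      (by simp), if_pos rfl, extendByZero, dif_pos hx]
  · rw [extendByZero, dif_neg hx, mul_zero]
    exact Finset.sum_eq_zero fun σ _ => by rw [if_neg (fun h : σ.1 = x => hx (h ▸ σ.2)), zero_mul]

lemma supercharge_add (F G : Config N → ℂ) (τ : Config N) :
    supercharge S (F + G) τ = supercharge S F τ + supercharge S G τ := by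
  simp only [supercharge, ← Finset.sum_add_distrib, Pi.add_apply]
  congr! 1; split_ifs <;> ring

lemma supercharge_sub (F G : Config N → ℂ) (τ : Config N) :
    supercharge S (F - G) τ = supercharge S F τ - supercharge S G τ := by
  simp only [supercharge, ← Finset.sum_sub_distrib, Pi.sub_apply]
  congr! 1; split_ifs <;> ring

lemma supercharge_congr {F G : Config N → ℂ} {τ : Config N}
    (h : ∀ i, S i → τ i = true → F (vacate τ i) = G (vacate τ i)) :
    supercharge S F τ = supercharge S G τ := by
  refine Finset.sum_congr rfl fun i _ => ?_
  split_ifs with hi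
  · rw [h i hi.1 hi.2]
  · rfl

lemma sum_sum_eq_zero_of_antisymm {ι M : Type*} [Fintype ι] [AddCommGroup M] [IsAddTorsionFree M]
    {T : ι → ι → M} (h : ∀ i j, T i j = -T j i) : ∑ i, ∑ j, T i j = 0 := by
  refine self_eq_neg.1 ?_
  calc ∑ i, ∑ j, T i j = ∑ j, ∑ i, -T j i :=
        Finset.sum_comm.trans <| Finset.sum_congr rfl fun j _ =>
          Finset.sum_congr rfl fun i _ => h i j
    _ = -∑ j, ∑ i, T j i := by simp only [Finset.sum_neg_distrib]

lemma supercharge_supercharge (F : Config N → ℂ) (σ : Config N) :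
    supercharge S (supercharge S F) σ = 0 := by
  set T : Fin N → Fin N → ℂ := fun i j =>
    if S i ∧ σ i = true ∧ S j ∧ vacate σ i j = true then
      sgn (vacate σ i) i * sgn (vacate (vacate σ i) j) j * F (vacate (vacate σ i) j)
    else 0 with hT
  have hexpand : supercharge S (supercharge S F) σ = ∑ i, ∑ j, T i j := by
    simp only [supercharge, hT, Finset.mul_sum]
    refine Finset.sum_congr rfl fun i _ => ?_
    split_ifs with hi
    · refine Finset.sum_congr rfl fun j _ => ?_
      simp only [hi, true_and]
      split_ifs <;> ring
    · exact (Finset.sum_eq_zero fun j _ => if_neg fun h => hi ⟨h.1, h.2.1⟩).symm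
  have hanti : ∀ i j, T i j = -T j i := by
    intro i j
    rcases eq_or_ne i j with rfl | hij
    · simp [hT]
    · simp only [hT, vacate_of_ne σ hij, vacate_of_ne σ hij.symm]
      split_ifs with h1 h2 h2
      · have hcomm : vacate (vacate σ i) j = vacate (vacate σ j) i :=
          Function.update_comm hij ..
        rw [sgn_vacate_vacate_antisymm hij h1.2.1 h2.2.1, hcomm]
        ring
      · exact absurd ⟨h1.2.2.1, h1.2.2.2, h1.1, h1.2.1⟩ h2
      · exact absurd ⟨h2.2.2.1, h2.2.2.2, h2.1, h2.2.1⟩ h1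
      · simp
  rw [hexpand]
  exact sum_sum_eq_zero_of_antisymm hanti

lemma Qop_apply {OK : Config N → Prop} (ψ : AState N OK) (τ : Config N) (hτ : OK τ) :
    Qop N OK S ψ ⟨τ, hτ⟩ = supercharge S (extendByZero ψ) τ := by
  simp only [Qop, QopA, Matrix.mulVecLin_apply, Matrix.mulVec, dotProduct, QmatA, one_mul,
    Finset.sum_mul, supercharge]
  rw [Finset.sum_comm]
  refine Finset.sum_congr rfl fun i _ => ?_
  by_cases hi : S i ∧ τ i = true
  · have hcond : ∀ σ : {σ // OK σ},
        (S i ∧ σ.1 i = false ∧ τ = Function.update σ.1 i true) ↔ σ.1 = vacate τ i :=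
      fun σ => (and_congr_right fun _ => eq_occupy_iff).trans (by simp [hi])
    rw [if_pos hi, ← sum_ite_val_eq_mul]
    refine Finset.sum_congr rfl fun σ _ => ?_
    by_cases hσ : σ.1 = vacate τ i
    · rw [if_pos ((hcond σ).2 hσ), if_pos hσ, hσ]
    · rw [if_neg (mt (hcond σ).1 hσ), if_neg hσ]
  · rw [if_neg hi]
    refine Finset.sum_eq_zero fun σ _ => ?_
    rw [if_neg fun h => hi ⟨h.1, (eq_occupy_iff.1 h.2).1⟩, zero_mul]

lemma exists_of_supercharge_ne_zero {F : Config N → ℂ} {τ : Config N}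
    (h : supercharge S F τ ≠ 0) : ∃ i, τ i = true ∧ F (vacate τ i) ≠ 0 := by
  obtain ⟨i, -, hi⟩ := Finset.exists_ne_zero_of_sum_ne_zero h
  by_cases hc : S i ∧ τ i = true
  · rw [if_pos hc] at hi
    exact ⟨i, hc.2, right_ne_zero_of_mul hi⟩
  · exact absurd (if_neg hc) hi

end Supercharge

section Contraction

variable {N : ℕ} (OK : Config N → Prop) (S : Fin N → Prop)

def contraction (v : Config N → Option (Fin N)) (F : Config N → ℂ) (μ : Config N) : ℂ :=
  (v μ).elim 0 fun w => if μ w = false then sgn μ w * F (occupy μ w) else 0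

/-- One homotopy step `F ↦ F - Q_S K_v F`, restricted to the allowed configurations. -/
def reduce (v : Config N → Option (Fin N)) (F : Config N → ℂ) (σ : Config N) : ℂ :=
  if OK σ then F σ - supercharge S (contraction v F) σ else 0

structure IsCocycle (f : ℕ) (F : Config N → ℂ) : Prop where
  eq_zero_of_not_ok : ∀ σ, ¬ OK σ → F σ = 0
  fermions_eq : ∀ σ, F σ ≠ 0 → fermions σ = f
  supercharge_eq_zero : ∀ σ, OK σ → supercharge S F σ = 0

/-- `η` has fermion number `f - 1`, stated without truncated subtraction so that `η = 0` when
`f = 0`. -/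
def Cohomologous (f : ℕ) (F G : Config N → ℂ) : Prop :=
  ∃ η : Config N → ℂ, (∀ μ, η μ ≠ 0 → fermions μ + 1 = f) ∧
    ∀ σ, OK σ → F σ = G σ + supercharge S η σ

variable {OK S} {v : Config N → Option (Fin N)}

lemma contraction_of_none {F : Config N → ℂ} {μ : Config N} (h : v μ = none) :
    contraction v F μ = 0 := by
  rw [contraction, h, Option.elim_none]

lemma contraction_of_some {F : Config N → ℂ} {μ : Config N} {w : Fin N} (h : v μ = some w) :
    contraction v F μ = if μ w = false then sgn μ w * F (occupy μ w) else 0 := by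
  rw [contraction, h, Option.elim_some]

lemma reduce_of_ok {F : Config N → ℂ} {σ : Config N} (h : OK σ) :
    reduce OK S v F σ = F σ - supercharge S (contraction v F) σ := if_pos h

lemma fermions_of_contraction_ne_zero {f : ℕ} {F : Config N → ℂ}
    (hF : ∀ σ, F σ ≠ 0 → fermions σ = f) {μ : Config N} (h : contraction v F μ ≠ 0) :
    fermions μ + 1 = f := by
  cases hμ : v μ with
  | none => exact absurd (contraction_of_none hμ) h
  | some w =>
    rw [contraction_of_some hμ] at h
    split_ifs at h with hw
    · rw [← fermions_occupy hw, hF _ (right_ne_zero_of_mul h)]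
    · exact absurd rfl h

section Selector

variable (hv : ∀ σ i, S i → v (vacate σ i) = v σ)
include hv

lemma supercharge_contraction_of_occupied (F : Config N → ℂ) {σ : Config N} {w : Fin N}
    (hw : v σ = some w) (hwS : S w) (hσw : σ w = true) :
    supercharge S (contraction v F) σ = F σ := by
  rw [supercharge, Finset.sum_eq_single w, if_pos ⟨hwS, hσw⟩,
    contraction_of_some ((hv σ w hwS).trans hw), if_pos (vacate_self σ w), occupy_vacate hσw,
    ← mul_assoc, sgn_mul_self, one_mul]
  · intro i _ hiw
    split_ifs with hi
    · rw [contraction_of_some ((hv σ i hi.1).trans hw), vacate_of_ne σ hiw.symm, hσw,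
        if_neg (by simp), mul_zero]
    · rfl
  · exact fun h => absurd (Finset.mem_univ w) h

lemma supercharge_contraction_of_vacant {F : Config N → ℂ} {σ : Config N} {w : Fin N}
    (hw : v σ = some w) (hwS : S w) (hσw : σ w = false)
    (hclosed : supercharge S F (occupy σ w) = 0) :
    supercharge S (contraction v F) σ = F σ := by
  -- The term `i ≠ w` of the left side is `-sgn σ w` times the term `i` of `(Q_S F) (σ + w) = 0`,
  -- whose term `w` is `sgn σ w * F σ`.
  set g : Fin N → ℂ := fun j => if S j ∧ occupy σ w j = true then
    sgn (vacate (occupy σ w) j) j * F (vacate (occupy σ w) j) else 0 with hg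
  have hgw : g w = sgn σ w * F σ := by
    simp only [hg, hwS, occupy_self, and_self, if_true, vacate_occupy hσw]
  have hterm : ∀ i, (if S i ∧ σ i = true then
      sgn (vacate σ i) i * contraction v F (vacate σ i) else 0)
      = -sgn σ w * g i + if i = w then sgn σ w * g w else 0 := by
    intro i
    rcases eq_or_ne i w with rfl | hiw
    · simp [hσw]
    · rw [if_neg hiw, add_zero, hg]
      simp only [occupy_of_ne σ hiw]
      split_ifs with hi
      · rw [contraction_of_some ((hv σ i hi.1).trans hw), vacate_of_ne σ hiw.symm,
          if_pos hσw, ← mul_assoc, sgn_vacate_occupy_antisymm hiw hi.2 hσw,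
          vacate_occupy_comm σ hiw]
        ring
      · ring
  rw [supercharge, Finset.sum_congr rfl fun i _ => hterm i, Finset.sum_add_distrib,
    ← Finset.mul_sum, Finset.sum_ite_eq' Finset.univ w, if_pos (Finset.mem_univ w)]
  rw [supercharge] at hclosed
  rw [show ∑ j, g j = 0 from hclosed, hgw, ← mul_assoc, sgn_mul_self]
  ring

lemma reduce_eq_zero_of_flippable {F : Config N → ℂ}
    (hF : ∀ σ, OK σ → supercharge S F σ = 0) {σ : Config N} (hσ : OK σ) {w : Fin N}
    (hw : v σ = some w) (hwS : S w) (hflip : σ w = true ∨ OK (occupy σ w)) :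
    reduce OK S v F σ = 0 := by
  rw [reduce_of_ok hσ, sub_eq_zero, eq_comm]
  cases hσw : σ w
  · exact supercharge_contraction_of_vacant hv hw hwS hσw
      (hF _ (hflip.resolve_left (by simp [hσw])))
  · exact supercharge_contraction_of_occupied hv F hw hwS hσw

lemma reduce_eq_zero_of_vanishing {F : Config N → ℂ} {σ : Config N} (hσ : OK σ) {w : Fin N}
    (hw : v σ = some w) (hFσ : F σ = 0)
    (hF : ∀ i, S i → σ i = true → vacate σ i w = false → F (occupy (vacate σ i) w) = 0) :
    reduce OK S v F σ = 0 := by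
  rw [reduce_of_ok hσ, hFσ, zero_sub, neg_eq_zero]
  refine Finset.sum_eq_zero fun i _ => ?_
  split_ifs with hi
  · rw [contraction_of_some ((hv σ i hi.1).trans hw)]
    split_ifs with hiw
    · rw [hF i hi.1 hi.2 hiw, mul_zero, mul_zero]
    · rw [mul_zero]
  · rfl

lemma reduce_of_none {F : Config N → ℂ} {σ : Config N} (hσ : OK σ) (hn : v σ = none) :
    reduce OK S v F σ = F σ := by
  rw [reduce_of_ok hσ, sub_eq_self]
  refine Finset.sum_eq_zero fun i _ => ?_
  split_ifs with hi
  · rw [contraction_of_none ((hv σ i hi.1).trans hn), mul_zero]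
  · rfl

end Selector

variable {f : ℕ} {F : Config N → ℂ}

lemma IsCocycle.reduce (hOK : ∀ σ i, S i → OK σ → OK (vacate σ i)) (hF : IsCocycle OK S f F) :
    IsCocycle OK S f (Mℓ.reduce OK S v F) where
  eq_zero_of_not_ok σ hσ := if_neg hσ
  fermions_eq σ h := by
    by_cases hσ : OK σ
    · rw [reduce_of_ok hσ] at h
      by_cases hFσ : F σ = 0
      · rw [hFσ, zero_sub, neg_ne_zero] at h
        obtain ⟨i, hi, hK⟩ := exists_of_supercharge_ne_zero S h
        rw [← fermions_vacate hi, fermions_of_contraction_ne_zero hF.fermions_eq hK]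
      · exact hF.fermions_eq σ hFσ
    · exact absurd (if_neg hσ) h
  supercharge_eq_zero σ hσ := by
    rw [supercharge_congr S (G := F - supercharge S (contraction v F))
        fun i hi _ => reduce_of_ok (hOK σ i hi hσ),
      supercharge_sub, hF.supercharge_eq_zero σ hσ, supercharge_supercharge, sub_zero]

lemma IsCocycle.cohomologous_reduce (hF : IsCocycle OK S f F) :
    Cohomologous OK S f F (Mℓ.reduce OK S v F) :=
  ⟨contraction v F, fun _ => fermions_of_contraction_ne_zero hF.fermions_eq,
    fun σ hσ => by rw [reduce_of_ok hσ, sub_add_cancel]⟩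

lemma Cohomologous.trans {F G H : Config N → ℂ} (hFG : Cohomologous OK S f F G)
    (hGH : Cohomologous OK S f G H) : Cohomologous OK S f F H := by
  obtain ⟨η, hη, hFη⟩ := hFG
  obtain ⟨θ, hθ, hGθ⟩ := hGH
  refine ⟨η + θ, fun μ hμ => ?_, fun σ hσ => ?_⟩
  · by_cases h : η μ = 0
    · exact hθ μ (by simpa [h] using hμ)
    · exact hη μ h
  · rw [hFη σ hσ, hGθ σ hσ, supercharge_add]
    ring

end Contraction

section Vacancies

variable {n : ℕ}

lemma extc_lt (σ : Config n) {t : ℕ} (h : t < n) : extc σ t = σ ⟨t, h⟩ := dif_pos h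

lemma extc_of_le (σ : Config n) {t : ℕ} (h : n ≤ t) : extc σ t = false := dif_neg (by omega)

lemma extc_update_of_ne (σ : Config n) {w : Fin n} (b : Bool) {t : ℕ} (h : t ≠ w.1) :
    extc (Function.update σ w b) t = extc σ t := by
  by_cases ht : t < n
  · rw [extc_lt _ ht, extc_lt _ ht, Function.update_of_ne (Fin.ne_of_val_ne h)]
  · rw [extc_of_le _ (not_lt.1 ht), extc_of_le _ (not_lt.1 ht)]

/-- Sites beyond the end of the chain count as vacant. -/
def HasVacancy (σ : Config n) (lo hi : ℕ) : Prop :=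
  ∃ t, lo ≤ t ∧ t ≤ hi ∧ extc σ t = false

variable {σ : Config n} {lo hi : ℕ}

lemma HasVacancy.mono (h : HasVacancy σ lo hi) {lo' hi' : ℕ} (hlo : lo' ≤ lo) (hhi : hi ≤ hi') :
    HasVacancy σ lo' hi' :=
  let ⟨t, h1, h2, h3⟩ := h; ⟨t, hlo.trans h1, h2.trans hhi, h3⟩

lemma HasVacancy.vacate (h : HasVacancy σ lo hi) (w : Fin n) : HasVacancy (vacate σ w) lo hi := by
  obtain ⟨t, h1, h2, h3⟩ := h
  refine ⟨t, h1, h2, ?_⟩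
  by_cases ht : t = w.1
  · subst ht
    exact (extc_lt _ w.isLt).trans (vacate_self σ w)
  · rwa [Mℓ.vacate, extc_update_of_ne _ _ ht]

lemma HasVacancy.occupy (h : HasVacancy σ lo hi) {w : Fin n} (hw : w.1 < lo ∨ hi < w.1) :
    HasVacancy (occupy σ w) lo hi := by
  obtain ⟨t, h1, h2, h3⟩ := h
  exact ⟨t, h1, h2, by rwa [Mℓ.occupy, extc_update_of_ne _ _ (by omega)]⟩

end Vacancies

section Block

variable {ℓ Nt : ℕ}

def tail (σ : Config (Nt + (ℓ + 2))) : Config Nt := fun j => σ ⟨ℓ + 2 + j.1, by omega⟩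

lemma tail_update (σ : Config (Nt + (ℓ + 2))) {i : Fin (Nt + (ℓ + 2))} (hi : i.1 < ℓ + 2)
    (b : Bool) : tail (Function.update σ i b) = tail σ := by
  funext j
  exact Function.update_of_ne (Fin.ne_of_val_ne (by simp; omega)) _ _

lemma tail_occupy (σ : Config (Nt + (ℓ + 2))) {i : Fin (Nt + (ℓ + 2))} (hi : i.1 < ℓ + 2) :
    tail (occupy σ i) = tail σ :=
  tail_update σ hi true

lemma tail_vacate (σ : Config (Nt + (ℓ + 2))) {i : Fin (Nt + (ℓ + 2))} (hi : i.1 < ℓ + 2) :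
    tail (vacate σ i) = tail σ :=
  tail_update σ hi false

lemma tail_glue (τ : Config Nt) : tail (glue ℓ Nt τ) = τ := by
  funext j
  simp [tail, glue]

variable (ℓ Nt) in
/-- Allowedness on both chains, seen from the block `S₁ = {0, …, ℓ+1}` (sites are numbered from
`0`): a configuration of the long chain is allowed iff its tail satisfies `tailOK` and its block
has a vacancy among the sites `0, …, left` and among `ℓ+1-right, …, ℓ+1`. -/
structure BlockCriterion where
  OKN : Config (Nt + (ℓ + 2)) → Prop
  OKt : Config Nt → Prop
  tailOK : Config Nt → Prop
  left : Config Nt → ℕ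
  right : Config Nt → ℕ
  left_le : ∀ τ, left τ ≤ ℓ
  right_le : ∀ τ, right τ ≤ ℓ
  OKN_iff : ∀ σ, OKN σ ↔ tailOK (tail σ) ∧ HasVacancy σ 0 (left (tail σ)) ∧
    HasVacancy σ (ℓ + 1 - right (tail σ)) (ℓ + 1)
  OKt_iff : ∀ τ, OKt τ ↔ tailOK τ ∧ ℓ ≤ left τ + right τ

lemma eq_glue_tail {σ : Config (Nt + (ℓ + 2))}
    (h : ∀ i : Fin (Nt + (ℓ + 2)), i.1 < ℓ + 2 → σ i = decide (1 ≤ i.1 ∧ i.1 ≤ ℓ)) :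
    σ = glue ℓ Nt (tail σ) := by
  funext i
  by_cases hi : i.1 < ℓ + 2
  · simp only [glue, dif_pos hi, h i hi]
  · simp only [glue, dif_neg hi, tail]
    congr
    ext
    simp only
    omega

def firstSite : Fin (Nt + (ℓ + 2)) := ⟨0, by omega⟩

def lastSite : Fin (Nt + (ℓ + 2)) := ⟨ℓ + 1, by omega⟩

@[simp] lemma firstSite_val : (firstSite : Fin (Nt + (ℓ + 2))).1 = 0 := rfl

@[simp] lemma lastSite_val : (lastSite : Fin (Nt + (ℓ + 2))).1 = ℓ + 1 := rfl

namespace BlockCriterion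

variable (D : BlockCriterion ℓ Nt)

def gapSite (τ : Config Nt) : Fin (Nt + (ℓ + 2)) :=
  ⟨D.left τ + 1, by have := D.left_le τ; omega⟩

/-- Active in the tail sectors `left + right < ℓ`, which contain no configuration `χ σ'`. -/
def gapSelector (σ : Config (Nt + (ℓ + 2))) : Option (Fin (Nt + (ℓ + 2))) :=
  if ℓ ≤ D.left (tail σ) + D.right (tail σ) then none else some (D.gapSite (tail σ))

variable {D}

lemma OKN_vacate {σ : Config (Nt + (ℓ + 2))} (hσ : D.OKN σ) {i : Fin (Nt + (ℓ + 2))}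
    (hi : i.1 < ℓ + 2) : D.OKN (vacate σ i) := by
  rw [D.OKN_iff] at hσ ⊢
  rw [tail_vacate σ hi]
  exact ⟨hσ.1, hσ.2.1.vacate i, hσ.2.2.vacate i⟩

lemma OKN_occupy {σ : Config (Nt + (ℓ + 2))} (hσ : D.OKN σ) {w : Fin (Nt + (ℓ + 2))}
    (hw : w.1 < ℓ + 2) (hl : HasVacancy (occupy σ w) 0 (D.left (tail σ)))
    (hr : HasVacancy (occupy σ w) (ℓ + 1 - D.right (tail σ)) (ℓ + 1)) :
    D.OKN (occupy σ w) := by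
  rw [D.OKN_iff, tail_occupy σ hw]
  exact ⟨((D.OKN_iff σ).1 hσ).1, hl, hr⟩

lemma gapSelector_vacate (σ : Config (Nt + (ℓ + 2))) (i : Fin (Nt + (ℓ + 2)))
    (hi : S1 (Nt + (ℓ + 2)) ℓ i) : D.gapSelector (vacate σ i) = D.gapSelector σ := by
  rw [gapSelector, gapSelector, tail_vacate σ hi]

lemma eq_glue_of_not_hasVacancy {σ : Config (Nt + (ℓ + 2))} (hσ : D.OKN σ)
    (hl : ¬ HasVacancy σ 1 (D.left (tail σ)))
    (hr : ¬ HasVacancy σ (ℓ + 1 - D.right (tail σ)) ℓ)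
    (hsec : ℓ ≤ D.left (tail σ) + D.right (tail σ)) :
    σ = glue ℓ Nt (tail σ) ∧ D.OKt (tail σ) := by
  obtain ⟨htail, ⟨x, -, hx, hσx⟩, ⟨y, hy, hy', hσy⟩⟩ := (D.OKN_iff σ).1 hσ
  have hx0 : x = 0 := by
    by_contra hne
    exact hl ⟨x, by omega, hx, hσx⟩
  have hyℓ : y = ℓ + 1 := by
    by_contra hne
    exact hr ⟨y, hy, by omega, hσy⟩
  refine ⟨eq_glue_tail fun i hi => ?_, (D.OKt_iff _).2 ⟨htail, hsec⟩⟩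
  rw [show σ i = extc σ i.1 from (extc_lt σ i.isLt).symm]
  by_cases hin : 1 ≤ i.1 ∧ i.1 ≤ ℓ
  · rw [decide_eq_true hin]
    by_contra hσi
    rw [Bool.not_eq_true] at hσi
    rcases le_or_gt i.1 (D.left (tail σ)) with h | h
    · exact hl ⟨i, hin.1, h, hσi⟩
    · exact hr ⟨i, by omega, hin.2, hσi⟩
  · rw [decide_eq_false hin]
    rcases Nat.lt_or_ge i.1 1 with h | h
    · rwa [show i.1 = x by omega]
    · rwa [show i.1 = y by omega]

section Stages

variable {f : ℕ} {F : Config (Nt + (ℓ + 2)) → ℂ}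

lemma reduce_firstSite_eq_zero (hF : IsCocycle D.OKN (S1 (Nt + (ℓ + 2)) ℓ) f F)
    {σ : Config (Nt + (ℓ + 2))} (hσ : D.OKN σ) (hl : HasVacancy σ 1 (D.left (tail σ))) :
    reduce D.OKN (S1 (Nt + (ℓ + 2)) ℓ) (fun _ => some firstSite) F σ = 0 := by
  have hr := D.right_le (tail σ)
  refine reduce_eq_zero_of_flippable (fun _ _ _ => rfl) hF.supercharge_eq_zero hσ rfl
    (show 0 < ℓ + 2 by omega) (Or.inr (OKN_occupy hσ (show 0 < ℓ + 2 by omega) ?_ ?_))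
  · exact (hl.occupy (by simp)).mono (Nat.zero_le 1) le_rfl
  · exact ((D.OKN_iff σ).1 hσ).2.2.occupy (by simp; omega)

lemma reduce_lastSite_eq_zero (hF : IsCocycle D.OKN (S1 (Nt + (ℓ + 2)) ℓ) f F)
    (hF₀ : ∀ σ, D.OKN σ → HasVacancy σ 1 (D.left (tail σ)) → F σ = 0)
    {σ : Config (Nt + (ℓ + 2))} (hσ : D.OKN σ)
    (h : HasVacancy σ 1 (D.left (tail σ)) ∨ HasVacancy σ (ℓ + 1 - D.right (tail σ)) ℓ) :
    reduce D.OKN (S1 (Nt + (ℓ + 2)) ℓ) (fun _ => some lastSite) F σ = 0 := by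
  have hlast : (lastSite : Fin (Nt + (ℓ + 2))).1 < ℓ + 2 := by simp
  have hl := D.left_le (tail σ)
  rcases h with hvac | hvac
  · refine reduce_eq_zero_of_vanishing (fun _ _ _ => rfl) hσ rfl (hF₀ σ hσ hvac)
      fun i hi _ _ => ?_
    -- vacating a site of the block and occupying `lastSite` keeps the vacancy in `1, …, left`
    by_cases hok : D.OKN (occupy (vacate σ i) lastSite)
    · refine hF₀ _ hok ?_
      rw [tail_occupy _ hlast, tail_vacate σ hi]
      exact (hvac.vacate i).occupy (by simp; omega)
    · exact hF.eq_zero_of_not_ok _ hok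
  · refine reduce_eq_zero_of_flippable (fun _ _ _ => rfl) hF.supercharge_eq_zero hσ rfl hlast
      (Or.inr (OKN_occupy hσ hlast ?_ ?_))
    · exact ((D.OKN_iff σ).1 hσ).2.1.occupy (by simp; omega)
    · exact (hvac.occupy (by simp)).mono le_rfl (Nat.le_succ ℓ)

lemma reduce_gapSelector_eq_zero (hF : IsCocycle D.OKN (S1 (Nt + (ℓ + 2)) ℓ) f F)
    (hF₁ : ∀ σ, D.OKN σ → HasVacancy σ 1 (D.left (tail σ)) ∨
      HasVacancy σ (ℓ + 1 - D.right (tail σ)) ℓ → F σ = 0)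
    {σ : Config (Nt + (ℓ + 2))} (hσ : D.OKN σ)
    (h : HasVacancy σ 1 (D.left (tail σ)) ∨ HasVacancy σ (ℓ + 1 - D.right (tail σ)) ℓ ∨
      ¬ ℓ ≤ D.left (tail σ) + D.right (tail σ)) :
    reduce D.OKN (S1 (Nt + (ℓ + 2)) ℓ) D.gapSelector F σ = 0 := by
  by_cases hsec : ℓ ≤ D.left (tail σ) + D.right (tail σ)
  · rw [reduce_of_none gapSelector_vacate hσ (if_pos hsec)]
    exact hF₁ σ hσ (h.imp_right fun h' => h'.resolve_right (not_not.2 hsec))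
  · have hl := D.left_le (tail σ)
    obtain ⟨-, hwl, hwr⟩ := (D.OKN_iff σ).1 hσ
    refine reduce_eq_zero_of_flippable gapSelector_vacate
      hF.supercharge_eq_zero hσ (if_neg hsec) (show D.left (tail σ) + 1 < ℓ + 2 by omega)
      (Or.inr (OKN_occupy hσ (show D.left (tail σ) + 1 < ℓ + 2 by omega) ?_ ?_))
    · exact hwl.occupy (by simp [gapSite])
    · exact hwr.occupy (by simp [gapSite]; omega)

theorem exists_cohomologous_glued (hF : IsCocycle D.OKN (S1 (Nt + (ℓ + 2)) ℓ) f F) :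
    ∃ G, Cohomologous D.OKN (S1 (Nt + (ℓ + 2)) ℓ) f F G ∧
      IsCocycle D.OKN (S1 (Nt + (ℓ + 2)) ℓ) f G ∧
      ∀ σ, G σ ≠ 0 → σ = glue ℓ Nt (tail σ) ∧ D.OKt (tail σ) := by
  have hOK : ∀ σ i, S1 (Nt + (ℓ + 2)) ℓ i → D.OKN σ → D.OKN (vacate σ i) :=
    fun _ _ hi hσ => OKN_vacate hσ hi
  set F₀ := reduce D.OKN (S1 (Nt + (ℓ + 2)) ℓ) (fun _ => some firstSite) F
  set F₁ := reduce D.OKN (S1 (Nt + (ℓ + 2)) ℓ) (fun _ => some lastSite) F₀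
  set F₂ := reduce D.OKN (S1 (Nt + (ℓ + 2)) ℓ) D.gapSelector F₁
  have hF₀ := hF.reduce (v := fun _ => some firstSite) hOK
  have hF₁ := hF₀.reduce (v := fun _ => some lastSite) hOK
  have hF₂ := hF₁.reduce (v := D.gapSelector) hOK
  have h₀ := fun σ => reduce_firstSite_eq_zero hF (σ := σ)
  have h₁ := fun σ => reduce_lastSite_eq_zero hF₀ h₀ (σ := σ)
  have h₂ := fun σ => reduce_gapSelector_eq_zero hF₁ h₁ (σ := σ)
  refine ⟨F₂, (hF.cohomologous_reduce.trans hF₀.cohomologous_reduce).trans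
    hF₁.cohomologous_reduce, hF₂, fun σ hF₂σ => ?_⟩
  have hσ : D.OKN σ := by_contra fun h => hF₂σ (hF₂.eq_zero_of_not_ok σ h)
  have hsec := by_contra fun h => hF₂σ (h₂ σ hσ (Or.inr (Or.inr h)))
  exact eq_glue_of_not_hasVacancy hσ (fun h => hF₂σ (h₂ σ hσ (Or.inl h)))
    (fun h => hF₂σ (h₂ σ hσ (Or.inr (Or.inl h)))) hsec

end Stages

end BlockCriterion

end Block

section Cohomology

variable {N : ℕ} {OK : Config N → Prop} {S : Fin N → Prop} {f : ℕ}

lemma isCocycle_extendByZero {ψ : AState N OK} (hQ : Qop N OK S ψ = 0)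
    (hψ : ψ ∈ gradeV N OK f) : IsCocycle OK S f (extendByZero ψ) where
  eq_zero_of_not_ok _ h := dif_neg h
  fermions_eq σ h := by
    by_contra hne
    by_cases hσ : OK σ
    · exact h (by rw [extendByZero, dif_pos hσ]; exact hψ ⟨σ, hσ⟩ hne)
    · exact h (dif_neg hσ)
  supercharge_eq_zero σ hσ := by rw [← Qop_apply S ψ σ hσ, hQ, Pi.zero_apply]

lemma sub_mem_map_Qop_of_cohomologous (hOK : ∀ σ i, S i → OK σ → OK (vacate σ i))
    {ψ φ : AState N OK} {G : Config N → ℂ}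
    (hψG : Cohomologous OK S f (extendByZero ψ) G) (hφ : ∀ σ, φ σ = G σ.1) :
    ψ - φ ∈ (gradeV N OK (f - 1)).map (Qop N OK S) := by
  obtain ⟨η, hη, hψη⟩ := hψG
  refine ⟨fun μ => η μ.1, fun μ hμ => by_contra fun h => hμ (by have := hη μ.1 h; omega), ?_⟩
  funext ⟨σ, hσ⟩
  have hψσ : ψ ⟨σ, hσ⟩ = G σ + supercharge S η σ := by
    rw [← hψη σ hσ, extendByZero, dif_pos hσ]
  rw [Qop_apply, Pi.sub_apply, hφ, hψσ, add_sub_cancel_left]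
  exact supercharge_congr S fun i hi _ => by rw [extendByZero, dif_pos (hOK σ i hi hσ)]

lemma cohDim_eq_zero (h : ∀ ψ ∈ cocycles N OK S f, ψ ∈ cobounds N OK S f) :
    cohDim N OK S f = 0 := by
  have : Subsingleton (CohSpace N OK S f) := by
    rw [Submodule.Quotient.subsingleton_iff, Submodule.eq_top_iff']
    exact fun ψ => h ψ.1 ψ.2
  exact Module.finrank_zero_of_subsingleton

end Cohomology

section Glue

variable {ℓ Nt : ℕ}

lemma fermions_eq_sum_extc {n : ℕ} (σ : Config n) :
    fermions σ = ∑ k ∈ Finset.range n, if extc σ k = true then 1 else 0 := by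
  rw [fermions, Finset.card_filter,
    ← Fin.sum_univ_eq_sum_range (fun k => if extc σ k = true then 1 else 0)]
  simp only [extc_lt σ (Fin.isLt _), Fin.eta]

lemma extc_glue_of_lt (τ : Config Nt) {k : ℕ} (hk : k < ℓ + 2) :
    extc (glue ℓ Nt τ) k = decide (1 ≤ k ∧ k ≤ ℓ) := by
  rw [extc_lt _ (by omega), glue, dif_pos hk]

lemma extc_glue_add (τ : Config Nt) (k : ℕ) : extc (glue ℓ Nt τ) (ℓ + 2 + k) = extc τ k := by
  by_cases hk : k < Nt
  · rw [extc_lt _ (by omega), extc_lt _ hk, glue, dif_neg (by simp)]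
    simp
  · rw [extc_of_le _ (by omega), extc_of_le _ (by omega)]

lemma fermions_glue (τ : Config Nt) : fermions (glue ℓ Nt τ) = ℓ + fermions τ := by
  have hblock : ∑ k ∈ Finset.range (ℓ + 2), (if extc (glue ℓ Nt τ) k = true then 1 else 0) = ℓ := by
    rw [Finset.sum_congr rfl fun k hk =>
        congrArg (fun b => if b = true then 1 else 0) (extc_glue_of_lt τ (Finset.mem_range.1 hk))]
    simp only [decide_eq_true_eq]
    rw [Finset.sum_boole, Nat.cast_id,
      show (Finset.range (ℓ + 2)).filter (fun k => 1 ≤ k ∧ k ≤ ℓ) = Finset.Icc 1 ℓ by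
        ext k; simp only [Finset.mem_filter, Finset.mem_range, Finset.mem_Icc]; omega,
      Nat.card_Icc, Nat.add_sub_cancel]
  rw [fermions_eq_sum_extc, fermions_eq_sum_extc,
    show Finset.range (Nt + (ℓ + 2)) = Finset.range (ℓ + 2 + Nt) by rw [add_comm],
    Finset.sum_range_add, hblock]
  simp only [extc_glue_add]

lemma Gop_apply_of_support {OKN : Config (Nt + (ℓ + 2)) → Prop} {OKt : Config Nt → Prop}
    {G : Config (Nt + (ℓ + 2)) → ℂ}
    (hG : ∀ σ, G σ ≠ 0 → σ = glue ℓ Nt (tail σ) ∧ OKt (tail σ)) (σ : {σ // OKN σ}) :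
    Gop ℓ Nt OKN OKt (fun τ => G (glue ℓ Nt τ.1)) σ = G σ.1 := by
  rw [Gop, Matrix.mulVecLin_apply, Matrix.mulVec, dotProduct]
  by_cases hσ : G σ.1 = 0
  · rw [hσ]
    refine Finset.sum_eq_zero fun τ _ => ?_
    by_cases h : σ.1 = glue ℓ Nt τ.1
    · rw [← h, hσ, mul_zero]
    · rw [Gmat, if_neg h, zero_mul]
  · obtain ⟨hglue, hOKt⟩ := hG σ.1 hσ
    rw [Finset.sum_eq_single ⟨tail σ.1, hOKt⟩, Gmat, if_pos hglue, one_mul]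
    · exact congrArg G hglue.symm
    · intro τ _ hτ
      rw [Gmat, if_neg fun h => hτ (Subtype.ext (by show τ.1 = tail σ.1; rw [h, tail_glue])),
        zero_mul]
    · exact fun h => absurd (Finset.mem_univ _) h

end Glue

theorem BlockCriterion.exists_glue_representative {ℓ Nt : ℕ} (D : BlockCriterion ℓ Nt) {f : ℕ}
    {ψ : AState (Nt + (ℓ + 2)) D.OKN} (hQ : Qop (Nt + (ℓ + 2)) D.OKN (S1 (Nt + (ℓ + 2)) ℓ) ψ = 0)
    (hψ : ψ ∈ gradeV (Nt + (ℓ + 2)) D.OKN f) :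
    ∃ ψ' : AState Nt D.OKt, ψ' ∈ gradeV Nt D.OKt (f - ℓ) ∧
      ψ - Gop ℓ Nt D.OKN D.OKt ψ' ∈
        (gradeV (Nt + (ℓ + 2)) D.OKN (f - 1)).map (Qop (Nt + (ℓ + 2)) D.OKN (S1 (Nt + (ℓ + 2)) ℓ)) ∧
      (f < ℓ → ψ' = 0) := by
  obtain ⟨G, hψG, hG, hsupp⟩ := D.exists_cohomologous_glued (isCocycle_extendByZero hQ hψ)
  have hfermions : ∀ τ : {τ // D.OKt τ}, G (glue ℓ Nt τ.1) ≠ 0 → ℓ + fermions τ.1 = f :=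
    fun τ h => (fermions_glue τ.1).symm.trans (hG.fermions_eq _ h)
  refine ⟨fun τ => G (glue ℓ Nt τ.1), fun τ hτ => ?_,
    sub_mem_map_Qop_of_cohomologous (fun _ _ hi hσ => BlockCriterion.OKN_vacate hσ hi) hψG
      (Gop_apply_of_support hsupp), fun hf => funext fun τ => ?_⟩
  · exact by_contra fun h => hτ (by have := hfermions τ h; omega)
  · exact by_contra fun h => by have := hfermions τ h; omega


section Runs

variable {n : ℕ}

lemma hasVacancy_of_le (σ : Config n) {lo hi : ℕ} (hlo : lo ≤ hi) (hhi : n ≤ hi) :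
    HasVacancy σ lo hi :=
  ⟨max lo n, le_max_left .., max_le hlo hhi, extc_of_le σ (le_max_right ..)⟩

lemma hasVacancy_iff_not_forall {σ : Config n} {a m : ℕ} :
    HasVacancy σ a (a + m) ↔ ¬ ∀ k ≤ m, extc σ (a + k) = true := by
  simp only [HasVacancy, not_forall, Bool.not_eq_true, exists_prop]
  constructor
  · rintro ⟨t, h1, h2, h3⟩
    exact ⟨t - a, by omega, by rwa [Nat.add_sub_cancel' h1]⟩
  · rintro ⟨k, hk, h⟩
    exact ⟨a + k, by omega, by omega, h⟩

lemma hasVacancy_end_iff_not_forall {σ : Config n} {m : ℕ} (hm : m < n) :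
    HasVacancy σ (n - 1 - m) (n - 1) ↔ ¬ ∀ k ≤ m, extc σ (n - 1 - k) = true := by
  simp only [HasVacancy, not_forall, Bool.not_eq_true, exists_prop]
  constructor
  · rintro ⟨t, h1, h2, h3⟩
    exact ⟨n - 1 - t, by omega, by rwa [show n - 1 - (n - 1 - t) = t by omega]⟩
  · rintro ⟨k, hk, h⟩
    exact ⟨n - 1 - k, by omega, by omega, h⟩

lemma exists_extc_eq_false (τ : Config n) : ∃ t, extc τ t = false := ⟨n, extc_of_le τ le_rfl⟩

def leadRun (τ : Config n) : ℕ := Nat.find (exists_extc_eq_false τ)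

def trailRun (τ : Config n) : ℕ := leadRun (τ ∘ Fin.rev)

lemma extc_leadRun (τ : Config n) : extc τ (leadRun τ) = false :=
  Nat.find_spec (exists_extc_eq_false τ)

lemma extc_of_lt_leadRun {τ : Config n} {t : ℕ} (h : t < leadRun τ) : extc τ t = true := by
  simpa using Nat.find_min (exists_extc_eq_false τ) h

lemma hasVacancy_zero_iff {τ : Config n} {m : ℕ} : HasVacancy τ 0 m ↔ leadRun τ ≤ m := by
  constructor
  · rintro ⟨t, -, ht, hτt⟩
    exact (Nat.find_min' _ hτt).trans ht
  · exact fun h => ⟨leadRun τ, Nat.zero_le _, h, extc_leadRun τ⟩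

lemma extc_comp_rev (τ : Config n) {k : ℕ} (hk : k < n) :
    extc (τ ∘ Fin.rev) k = extc τ (n - 1 - k) := by
  rw [extc_lt _ hk, extc_lt _ (by omega), Function.comp_apply]
  congr 1
  ext
  simp only [Fin.val_rev]
  omega

lemma hasVacancy_sub_one_iff {τ : Config n} {j : ℕ} (hj : j < n) :
    HasVacancy τ j (n - 1) ↔ j + trailRun τ < n := by
  have hrev : HasVacancy τ j (n - 1) ↔ HasVacancy (τ ∘ Fin.rev) 0 (n - 1 - j) := by
    constructor
    · rintro ⟨t, h1, h2, h3⟩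
      exact ⟨n - 1 - t, Nat.zero_le _, by omega,
        by rwa [extc_comp_rev τ (by omega), show n - 1 - (n - 1 - t) = t by omega]⟩
    · rintro ⟨k, -, hk, h⟩
      exact ⟨n - 1 - k, by omega, by omega, by rwa [extc_comp_rev τ (by omega)] at h⟩
  rw [hrev, hasVacancy_zero_iff, trailRun]
  omega

variable {ℓ : ℕ} {τ : Config n}

lemma leadRun_le_of_forall (h : ∀ a, HasVacancy τ a (a + ℓ)) : leadRun τ ≤ ℓ :=
  hasVacancy_zero_iff.1 (by simpa using h 0)

lemma trailRun_le_of_forall (hℓ : ℓ < n) (h : ∀ a, HasVacancy τ a (a + ℓ)) : trailRun τ ≤ ℓ := by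
  have := (hasVacancy_sub_one_iff (τ := τ) (j := n - 1 - ℓ) (by omega)).1
    ((h (n - 1 - ℓ)).mono le_rfl (by omega))
  omega

/-- The windows `j, …, j+ℓ` of a periodic chain that run past the end of `τ`; `P m` says that
the chain continuing after `τ` has a vacancy among its first `m + 1` sites. -/
lemma forall_wrap_iff {P : ℕ → Prop} (hP : Monotone P) (hPℓ : P ℓ) (he : trailRun τ ≤ ℓ)
    (hℓ : ℓ < n) :
    (∀ j < n, n ≤ j + ℓ → HasVacancy τ j (n - 1) ∨ P (j + ℓ - n)) ↔ P (ℓ - trailRun τ) := by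
  constructor
  · intro h
    rcases Nat.eq_zero_or_pos (trailRun τ) with h0 | hpos
    · rwa [h0, Nat.sub_zero]
    · rcases h (n - trailRun τ) (by omega) (by omega) with hv | hPe
      · rw [hasVacancy_sub_one_iff (by omega)] at hv
        omega
      · rwa [show n - trailRun τ + ℓ - n = ℓ - trailRun τ by omega] at hPe
  · intro h j hj _
    by_cases hv : j + trailRun τ < n
    · exact Or.inl ((hasVacancy_sub_one_iff hj).2 hv)
    · exact Or.inr (hP (by omega) h)

end Runs

section Windows

variable {ℓ Nt : ℕ}

lemma extc_tail (σ : Config (Nt + (ℓ + 2))) (j : ℕ) : extc (tail σ) j = extc σ (ℓ + 2 + j) := by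
  by_cases hj : j < Nt
  · rw [extc_lt _ hj, extc_lt _ (by omega)]
    rfl
  · rw [extc_of_le _ (by omega), extc_of_le _ (by omega)]

lemma hasVacancy_tail {σ : Config (Nt + (ℓ + 2))} {lo hi : ℕ} :
    HasVacancy (tail σ) lo hi ↔ HasVacancy σ (ℓ + 2 + lo) (ℓ + 2 + hi) := by
  constructor
  · rintro ⟨t, h1, h2, h3⟩
    exact ⟨ℓ + 2 + t, by omega, by omega, by rwa [← extc_tail]⟩
  · rintro ⟨t, h1, h2, h3⟩
    exact ⟨t - (ℓ + 2), by omega, by omega,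
      by rwa [extc_tail, show ℓ + 2 + (t - (ℓ + 2)) = t by omega]⟩

lemma forall_hasVacancy_iff {σ : Config (Nt + (ℓ + 2))} :
    (∀ a, HasVacancy σ a (a + ℓ)) ↔
      (∀ a ≤ ℓ + 1, HasVacancy σ a (a + ℓ)) ∧ ∀ j, HasVacancy (tail σ) j (j + ℓ) := by
  refine ⟨fun h => ⟨fun a _ => h a, fun j => hasVacancy_tail.2 ((h (ℓ + 2 + j)).mono le_rfl
    (by omega))⟩, fun ⟨hb, ht⟩ a => ?_⟩
  by_cases ha : a ≤ ℓ + 1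
  · exact hb a ha
  · exact (hasVacancy_tail.1 (ht (a - (ℓ + 2)))).mono (by omega) (by omega)

lemma forall_hasVacancy_block_iff {σ : Config (Nt + (ℓ + 2))} (he : leadRun (tail σ) ≤ ℓ) :
    (∀ a ≤ ℓ + 1, HasVacancy σ a (a + ℓ)) ↔
      HasVacancy σ 0 ℓ ∧ HasVacancy σ (leadRun (tail σ) + 1) (ℓ + 1) := by
  constructor
  · intro h
    refine ⟨by simpa using h 0 (by omega), ?_⟩
    obtain ⟨t, h1, h2, h3⟩ := h (leadRun (tail σ) + 1) (by omega)
    refine ⟨t, h1, not_lt.1 fun ht => ?_, h3⟩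
    have := extc_of_lt_leadRun (τ := tail σ) (t := t - (ℓ + 2)) (by omega)
    rw [extc_tail, show ℓ + 2 + (t - (ℓ + 2)) = t by omega, h3] at this
    exact Bool.false_ne_true this
  · rintro ⟨h0, t, h1, h2, h3⟩ a ha
    rcases Nat.eq_zero_or_pos a with rfl | ha0
    · simpa using h0
    · by_cases hat : a ≤ t
      · exact ⟨t, hat, by omega, h3⟩
      · refine ⟨ℓ + 2 + leadRun (tail σ), by omega, by omega, ?_⟩
        rw [← extc_tail]
        exact extc_leadRun _

end Windows

section OpenChain

variable {ℓ Nt c₁ cN : ℕ}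

lemma openOK_iff {n : ℕ} {σ : Config n} (hc₁ : c₁ < n) (hcN : cN < n) :
    OpenOK n ℓ c₁ cN σ ↔ (∀ a, HasVacancy σ a (a + ℓ)) ∧ HasVacancy σ 0 c₁ ∧
      HasVacancy σ (n - 1 - cN) (n - 1) := by
  have h0 := hasVacancy_iff_not_forall (σ := σ) (a := 0) (m := c₁)
  simp only [zero_add] at h0
  simp only [OpenOK, Nat.succ_le_of_lt hc₁, Nat.succ_le_of_lt hcN, true_and,
    ← hasVacancy_iff_not_forall, ← h0, ← hasVacancy_end_iff_not_forall hcN]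

lemma openOK_long_iff (hc₁ : c₁ ≤ ℓ) (hcN : cN ≤ ℓ) (hNt : ℓ < Nt) (σ : Config (Nt + (ℓ + 2))) :
    OpenOK (Nt + (ℓ + 2)) ℓ c₁ cN σ ↔
      ((∀ a, HasVacancy (tail σ) a (a + ℓ)) ∧ HasVacancy (tail σ) (Nt - 1 - cN) (Nt - 1)) ∧
        HasVacancy σ 0 c₁ ∧ HasVacancy σ (ℓ + 1 - (ℓ - leadRun (tail σ))) (ℓ + 1) := by
  rw [openOK_iff (by omega) (by omega), forall_hasVacancy_iff, hasVacancy_tail (lo := Nt - 1 - cN),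
    show ℓ + 2 + (Nt - 1 - cN) = Nt + (ℓ + 2) - 1 - cN by omega,
    show ℓ + 2 + (Nt - 1) = Nt + (ℓ + 2) - 1 by omega]
  constructor
  · rintro ⟨⟨hb, ht⟩, h0, hend⟩
    have he := leadRun_le_of_forall ht
    obtain ⟨-, h1⟩ := (forall_hasVacancy_block_iff he).1 hb
    rw [show ℓ + 1 - (ℓ - leadRun (tail σ)) = leadRun (tail σ) + 1 by omega]
    exact ⟨⟨ht, hend⟩, h0, h1⟩
  · rintro ⟨⟨ht, hend⟩, h0, h1⟩
    have he := leadRun_le_of_forall ht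
    rw [show ℓ + 1 - (ℓ - leadRun (tail σ)) = leadRun (tail σ) + 1 by omega] at h1
    exact ⟨⟨(forall_hasVacancy_block_iff he).2 ⟨h0.mono le_rfl hc₁, h1⟩, ht⟩, h0, hend⟩

lemma openOK_short_iff (hc₁ : c₁ ≤ ℓ) (hcN : cN ≤ ℓ) (hNt : ℓ < Nt) (τ : Config Nt) :
    OpenOK Nt ℓ c₁ cN τ ↔
      ((∀ a, HasVacancy τ a (a + ℓ)) ∧ HasVacancy τ (Nt - 1 - cN) (Nt - 1)) ∧
        ℓ ≤ c₁ + (ℓ - leadRun τ) := by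
  rw [openOK_iff (by omega) (by omega), hasVacancy_zero_iff]
  constructor
  · rintro ⟨ht, h0, hend⟩
    exact ⟨⟨ht, hend⟩, by omega⟩
  · rintro ⟨⟨ht, hend⟩, h⟩
    have := leadRun_le_of_forall ht
    exact ⟨ht, by omega, hend⟩

def BlockCriterion.openChain (hc₁ : c₁ ≤ ℓ) (hcN : cN ≤ ℓ) (hNt : ℓ < Nt) :
    BlockCriterion ℓ Nt where
  OKN := OpenOK (Nt + (ℓ + 2)) ℓ c₁ cN
  OKt := OpenOK Nt ℓ c₁ cN
  tailOK τ := (∀ a, HasVacancy τ a (a + ℓ)) ∧ HasVacancy τ (Nt - 1 - cN) (Nt - 1)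
  left _ := c₁
  right τ := ℓ - leadRun τ
  left_le _ := hc₁
  right_le _ := Nat.sub_le ..
  OKN_iff := openOK_long_iff hc₁ hcN hNt
  OKt_iff := openOK_short_iff hc₁ hcN hNt

end OpenChain

section PeriodicChain

variable {ℓ Nt : ℕ}

lemma exists_cyc_eq_false_iff {n : ℕ} {σ : Config n} (hℓ : ℓ < n) (i : Fin n) :
    (∃ k ≤ ℓ, σ (cyc i k) = false) ↔
      HasVacancy σ i (min (i + ℓ) (n - 1)) ∨ (n ≤ i + ℓ ∧ HasVacancy σ 0 (i + ℓ - n)) := by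
  have hcyc : ∀ k t (ht : t < n), (i.1 + k) % n = t → σ (cyc i k) = extc σ t :=
    fun k t ht h => by rw [extc_lt σ ht]; exact congrArg σ (Fin.ext h)
  constructor
  · rintro ⟨k, hk, hσ⟩
    by_cases hik : i.1 + k < n
    · exact Or.inl ⟨i + k, by omega, by omega, by rwa [← hcyc k _ hik (Nat.mod_eq_of_lt hik)]⟩
    · refine Or.inr ⟨by omega, i + k - n, by omega, by omega, ?_⟩
      rwa [← hcyc k _ (by omega)]
      rw [Nat.mod_eq_sub_mod (by omega), Nat.mod_eq_of_lt (by omega)]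
  · rintro (⟨t, h1, h2, h3⟩ | ⟨hw, t, -, h2, h3⟩)
    · refine ⟨t - i, by omega, ?_⟩
      rwa [hcyc _ t (by omega) (by rw [Nat.mod_eq_of_lt (by omega)]; omega)]
    · refine ⟨n - i + t, by omega, ?_⟩
      rwa [hcyc _ t (by omega)
        (by rw [show i.1 + (n - i + t) = t + n by omega, Nat.add_mod_right,
          Nat.mod_eq_of_lt (by omega)])]

lemma perOK_iff {n : ℕ} {σ : Config n} (hℓ : ℓ < n) :
    PerOK n ℓ σ ↔ (∀ a, HasVacancy σ a (a + ℓ)) ∧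
      ∀ a < n, n ≤ a + ℓ → HasVacancy σ a (n - 1) ∨ HasVacancy σ 0 (a + ℓ - n) := by
  simp only [PerOK, exists_cyc_eq_false_iff hℓ]
  constructor
  · intro h
    refine ⟨fun a => ?_, fun a ha haℓ => ?_⟩
    · by_cases haℓ : a + ℓ < n
      · rcases h ⟨a, by omega⟩ with hv | ⟨hle, -⟩
        · exact hv.mono le_rfl (min_le_left ..)
        · exact absurd hle (by simpa using haℓ)
      · exact hasVacancy_of_le σ (by omega) (by omega)
    · rcases h ⟨a, ha⟩ with hv | ⟨-, hv⟩
      · exact Or.inl (hv.mono le_rfl (min_le_right ..))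
      · exact Or.inr hv
  · rintro ⟨hrun, hwrap⟩ i
    by_cases hiℓ : i.1 + ℓ < n
    · exact Or.inl (by rw [min_eq_left (by omega)]; exact hrun i)
    · rcases hwrap i i.isLt (by omega) with hv | hv
      · exact Or.inl (by rw [min_eq_right (by omega)]; exact hv)
      · exact Or.inr ⟨by omega, hv⟩

lemma perOK_long_iff (hNt : ℓ < Nt) (σ : Config (Nt + (ℓ + 2))) :
    PerOK (Nt + (ℓ + 2)) ℓ σ ↔ (∀ a, HasVacancy (tail σ) a (a + ℓ)) ∧
      HasVacancy σ 0 (ℓ - trailRun (tail σ)) ∧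
      HasVacancy σ (ℓ + 1 - (ℓ - leadRun (tail σ))) (ℓ + 1) := by
  have hwrap : (∀ a < Nt + (ℓ + 2), Nt + (ℓ + 2) ≤ a + ℓ →
      HasVacancy σ a (Nt + (ℓ + 2) - 1) ∨ HasVacancy σ 0 (a + ℓ - (Nt + (ℓ + 2)))) ↔
      ∀ j < Nt, Nt ≤ j + ℓ → HasVacancy (tail σ) j (Nt - 1) ∨ HasVacancy σ 0 (j + ℓ - Nt) := by
    constructor
    · intro h j hj hjℓ
      rw [hasVacancy_tail, show ℓ + 2 + (Nt - 1) = Nt + (ℓ + 2) - 1 by omega,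
        show j + ℓ - Nt = ℓ + 2 + j + ℓ - (Nt + (ℓ + 2)) by omega]
      exact h (ℓ + 2 + j) (by omega) (by omega)
    · intro h a ha haℓ
      have := h (a - (ℓ + 2)) (by omega) (by omega)
      rwa [hasVacancy_tail, show ℓ + 2 + (a - (ℓ + 2)) = a by omega,
        show ℓ + 2 + (Nt - 1) = Nt + (ℓ + 2) - 1 by omega,
        show a - (ℓ + 2) + ℓ - Nt = a + ℓ - (Nt + (ℓ + 2)) by omega] at this
  have hmono : Monotone (HasVacancy σ 0) := fun _ _ hab h => h.mono le_rfl hab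
  rw [perOK_iff (by omega), forall_hasVacancy_iff, hwrap]
  constructor
  · rintro ⟨⟨hb, ht⟩, hw⟩
    have he := leadRun_le_of_forall ht
    obtain ⟨h0, h1⟩ := (forall_hasVacancy_block_iff he).1 hb
    refine ⟨ht, (forall_wrap_iff hmono h0 (trailRun_le_of_forall hNt ht) hNt).1 hw, ?_⟩
    rwa [show ℓ + 1 - (ℓ - leadRun (tail σ)) = leadRun (tail σ) + 1 by omega]
  · rintro ⟨ht, h0, h1⟩
    have he := leadRun_le_of_forall ht
    have hℓ : HasVacancy σ 0 ℓ := h0.mono le_rfl (Nat.sub_le ..)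
    rw [show ℓ + 1 - (ℓ - leadRun (tail σ)) = leadRun (tail σ) + 1 by omega] at h1
    exact ⟨⟨(forall_hasVacancy_block_iff he).2 ⟨hℓ, h1⟩, ht⟩,
      (forall_wrap_iff hmono hℓ (trailRun_le_of_forall hNt ht) hNt).2 h0⟩

lemma perOK_short_iff (hNt : ℓ < Nt) (τ : Config Nt) :
    PerOK Nt ℓ τ ↔ (∀ a, HasVacancy τ a (a + ℓ)) ∧ ℓ ≤ (ℓ - trailRun τ) + (ℓ - leadRun τ) := by
  have hmono : Monotone (leadRun τ ≤ ·) := fun _ _ hab h => h.trans hab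
  rw [perOK_iff hNt]
  simp only [hasVacancy_zero_iff]
  constructor
  · rintro ⟨ht, hw⟩
    have he := leadRun_le_of_forall ht
    have := (forall_wrap_iff hmono he (trailRun_le_of_forall hNt ht) hNt).1 hw
    exact ⟨ht, by omega⟩
  · rintro ⟨ht, h⟩
    have he := leadRun_le_of_forall ht
    exact ⟨ht, (forall_wrap_iff hmono he (trailRun_le_of_forall hNt ht) hNt).2 (by omega)⟩

def BlockCriterion.periodic (hNt : ℓ < Nt) : BlockCriterion ℓ Nt where
  OKN := PerOK (Nt + (ℓ + 2)) ℓ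
  OKt := PerOK Nt ℓ
  tailOK τ := ∀ a, HasVacancy τ a (a + ℓ)
  left τ := ℓ - trailRun τ
  right τ := ℓ - leadRun τ
  left_le _ := Nat.sub_le ..
  right_le _ := Nat.sub_le ..
  OKN_iff := perOK_long_iff hNt
  OKt_iff := perOK_short_iff hNt

end PeriodicChain

end Mℓ

theorem structure_of_HQ1_general (ℓ Nt : ℕ) (hNt : ℓ < Nt)
    (OKN : Config (Nt + (ℓ + 2)) → Prop) (OKt : Config Nt → Prop)
    (hBC : (OKN = PerOK (Nt + (ℓ + 2)) ℓ ∧ OKt = PerOK Nt ℓ) ∨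
      ∃ c₁ cN, c₁ ≤ ℓ ∧ cN ≤ ℓ ∧
        OKN = OpenOK (Nt + (ℓ + 2)) ℓ c₁ cN ∧ OKt = OpenOK Nt ℓ c₁ cN) :
    (∀ f, f < ℓ → cohDim (Nt + (ℓ + 2)) OKN (S1 (Nt + (ℓ + 2)) ℓ) f = 0) ∧
    (∀ f, ℓ ≤ f → ∀ ψ : AState (Nt + (ℓ + 2)) OKN,
      Qop (Nt + (ℓ + 2)) OKN (S1 (Nt + (ℓ + 2)) ℓ) ψ = 0 →
      ψ ∈ gradeV (Nt + (ℓ + 2)) OKN f →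
      ∃ ψ' : AState Nt OKt, ψ' ∈ gradeV Nt OKt (f - ℓ) ∧
        ψ - Gop ℓ Nt OKN OKt ψ' ∈
          (gradeV (Nt + (ℓ + 2)) OKN (f - 1)).map
            (Qop (Nt + (ℓ + 2)) OKN (S1 (Nt + (ℓ + 2)) ℓ)) ∧
        (ψ ∉ (gradeV (Nt + (ℓ + 2)) OKN (f - 1)).map
            (Qop (Nt + (ℓ + 2)) OKN (S1 (Nt + (ℓ + 2)) ℓ)) → ψ' ≠ 0)) := by
  obtain ⟨D, rfl, rfl⟩ : ∃ D : Mℓ.BlockCriterion ℓ Nt, D.OKN = OKN ∧ D.OKt = OKt := by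
    rcases hBC with ⟨rfl, rfl⟩ | ⟨c₁, cN, hc₁, hcN, rfl, rfl⟩
    · exact ⟨.periodic hNt, rfl, rfl⟩
    · exact ⟨.openChain hc₁ hcN hNt, rfl, rfl⟩
  refine ⟨fun f hf => Mℓ.cohDim_eq_zero fun ψ hψ => ?_, fun f _ ψ hQ hψ => ?_⟩
  · obtain ⟨ψ', -, hmem, hzero⟩ := D.exists_glue_representative hψ.1 hψ.2
    rwa [hzero hf, map_zero, sub_zero] at hmem
  · obtain ⟨ψ', hψ', hmem, -⟩ := D.exists_glue_representative hQ hψ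
    refine ⟨ψ', hψ', hmem, fun hψ_not hzero => hψ_not ?_⟩
    rwa [hzero, map_zero, sub_zero] at hmem

/-- Structure of the cohomology of `Q₁` (the supercharge restricted to the first
`ℓ+2` sites) for a chain of `N = Ñ + (ℓ+2) > 2ℓ+2` sites with periodic or special
boundary conditions: (a) `H_{Q₁}^f = 0` for `f < ℓ`; (b) for `f ≥ ℓ`, every class of
`H_{Q₁}^f` is represented by a state of the form `G ψ'` with
`ψ' ∈ V_{Ñ, f-ℓ}` (with the corresponding boundary conditions), and nonzero classes
have such representatives with `ψ' ≠ 0`. -/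
theorem structure_of_HQ1 (ℓ Nt : ℕ) (hℓ : 1 ≤ ℓ) (hNt : ℓ < Nt)
    (OKN : Config (Nt + (ℓ + 2)) → Prop) (OKt : Config Nt → Prop)
    (hBC : (OKN = PerOK (Nt + (ℓ + 2)) ℓ ∧ OKt = PerOK Nt ℓ) ∨
      ∃ c₁ cN, c₁ ≤ ℓ ∧ cN ≤ ℓ ∧
        OKN = OpenOK (Nt + (ℓ + 2)) ℓ c₁ cN ∧ OKt = OpenOK Nt ℓ c₁ cN) :
    (∀ f, f < ℓ → cohDim (Nt + (ℓ + 2)) OKN (S1 (Nt + (ℓ + 2)) ℓ) f = 0) ∧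
    (∀ f, ℓ ≤ f → ∀ ψ : AState (Nt + (ℓ + 2)) OKN,
      Qop (Nt + (ℓ + 2)) OKN (S1 (Nt + (ℓ + 2)) ℓ) ψ = 0 →
      ψ ∈ gradeV (Nt + (ℓ + 2)) OKN f →
      ∃ ψ' : AState Nt OKt, ψ' ∈ gradeV Nt OKt (f - ℓ) ∧
        ψ - Gop ℓ Nt OKN OKt ψ' ∈
          (gradeV (Nt + (ℓ + 2)) OKN (f - 1)).map
            (Qop (Nt + (ℓ + 2)) OKN (S1 (Nt + (ℓ + 2)) ℓ)) ∧
        (ψ ∉ (gradeV (Nt + (ℓ + 2)) OKN (f - 1)).map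
            (Qop (Nt + (ℓ + 2)) OKN (S1 (Nt + (ℓ + 2)) ℓ)) → ψ' ≠ 0)) :=
  structure_of_HQ1_general ℓ Nt hNt OKN OKt hBC

end
end
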